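/- arXiv:1005.1186 — 4 statements merged into one kernel-verified Lean document; each statement's English description precedes it below -/
import Mathlib

section
/- For a subset J of S, every element w of W with ℓ(sw) ≥ ℓ(w) for all s ∈ J satisfies ℓ(w⁻¹uw) ≥ ℓ(u) for all u in the parabolic subgroup W_J. -/
/-!
If `ℓ(s w) ≥ ℓ(w)` for all `s ∈ J`, then `w` is the shortest element of `W_J w`: otherwise
`w = v x` with `x` shortest and `1 ≠ v ∈ W_J`, and the first letter of a reduced `J`-word for `v`
is a left descent of `w`. For a shortest `w`, `ℓ(u w) = ℓ(u) + ℓ(w)` for all `u ∈ W_J`, by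
induction on `ℓ(u)` and the exchange property: if `u = s u'` is reduced and `s` is a left descent
of `u' w`, the exchanged letter either shortens `u` or produces an element of `W_J w` shorter
than `w`. Hence `ℓ(u) + ℓ(w) = ℓ(w · w⁻¹uw) ≤ ℓ(w) + ℓ(w⁻¹uw)`.

The exchange property comes from the permutation representation of `W` on `W × ZMod 2`
(Björner–Brenti, Thm. 1.4.3): it shows that the parity of the number of occurrences of `t` in
the inversion sequence of a word depends only on the product of the word.
-/

theorem mul_mul_inv_eq_iff_eq_inv_mul_mul {G : Type*} [Group G] (a t b : G) :
    a * t * a⁻¹ = b ↔ t = a⁻¹ * b * a := by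
  constructor
  · rintro rfl
    group
  · rintro rfl
    group

namespace CoxeterSystem

open List

variable {B W : Type*} [Group W] {M : CoxeterMatrix B} (cs : CoxeterSystem M W)

local prefix:100 "s" => cs.simple
local prefix:100 "π" => cs.wordProd
local prefix:100 "ℓ" => cs.length
local prefix:100 "ris" => cs.rightInvSeq
local prefix:100 "lis" => cs.leftInvSeq

theorem simple_mul_mul_simple_eq_iff (i : B) (x y : W) :
    s i * x * s i = y ↔ x = s i * y * s i := by
  constructor <;> rintro rfl <;> simp [mul_assoc]

theorem simple_mul_pow_mul_simple (i j : B) (n : ℕ) :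
    s j * (s i * s j) ^ n * s j = ((s i * s j) ^ n)⁻¹ := by
  have h : s j * (s i * s j) * s j = (s i * s j)⁻¹ := by simp [mul_assoc]
  have := conj_pow (a := s j) (b := s i * s j) (i := n)
  rw [inv_simple, h, inv_pow] at this
  exact this.symm

theorem pow_conj_eq_simple_mul_pow_iff (i j : B) (n k : ℕ) (t : W) :
    (s i * s j) ^ n * t * ((s i * s j) ^ n)⁻¹ = s j * (s i * s j) ^ k ↔
      t = s j * (s i * s j) ^ (2 * n + k) := by
  have hswap : ((s i * s j) ^ n)⁻¹ * s j = s j * (s i * s j) ^ n := by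
    rw [← simple_mul_pow_mul_simple]
    simp [mul_assoc]
  set c := s i * s j
  rw [mul_mul_inv_eq_iff_eq_inv_mul_mul, ← mul_assoc (c ^ n)⁻¹, hswap, mul_assoc, mul_assoc,
    ← pow_add, ← pow_add]
  congr! 3
  omega

section PermRep

variable [DecidableEq W]

/-- Björner–Brenti's action `(t, ε) ↦ (s t s, ε η(s; t))` on `T × {±1}`, where `η(s; t) = -1`
iff `t = s`, written additively on `W × ZMod 2`. -/
def simplePerm (i : B) : Equiv.Perm (W × ZMod 2) :=
  Function.Involutive.toPerm (fun p => (s i * p.1 * s i, p.2 + if p.1 = s i then 1 else 0))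
    (by
      rintro ⟨t, ε⟩
      refine Prod.ext (by simp [mul_assoc]) ?_
      simp only [simple_mul_mul_simple_eq_iff, simple_mul_simple_self, one_mul, add_assoc,
        CharTwo.add_self_eq_zero, add_zero])

theorem simplePerm_apply (i : B) (t : W) (ε : ZMod 2) :
    cs.simplePerm i (t, ε) = (s i * t * s i, ε + if t = s i then 1 else 0) :=
  rfl

theorem simplePerm_mul_pow_apply (i j : B) (n : ℕ) (t : W) (ε : ZMod 2) :
    ((cs.simplePerm i * cs.simplePerm j) ^ n) (t, ε) =
      ((s i * s j) ^ n * t * ((s i * s j) ^ n)⁻¹,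
        ε + ∑ k ∈ Finset.range (2 * n), if t = s j * (s i * s j) ^ k then 1 else 0) := by
  induction n with
  | zero => simp
  | succ n ih =>
    rw [pow_succ', Equiv.Perm.mul_apply, ih, Equiv.Perm.mul_apply, simplePerm_apply,
      simplePerm_apply]
    refine Prod.ext (by simp [pow_succ', mul_assoc]) ?_
    have hj := pow_conj_eq_simple_mul_pow_iff cs i j n 0 t
    have hi : s j * ((s i * s j) ^ n * t * ((s i * s j) ^ n)⁻¹) * s j = s i ↔
        t = s j * (s i * s j) ^ (2 * n + 1) := by
      rw [simple_mul_mul_simple_eq_iff, ← pow_conj_eq_simple_mul_pow_iff, pow_one,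
        ← mul_assoc (s j)]
    rw [pow_zero, mul_one, add_zero] at hj
    simp only [hi, hj, mul_add_one, Finset.sum_range_succ]
    ring

theorem isLiftable_simplePerm : M.IsLiftable cs.simplePerm := by
  intro i j
  refine Equiv.ext fun ⟨t, ε⟩ => ?_
  have hperiodic : ∀ k, s j * (s i * s j) ^ (M i j + k) = s j * (s i * s j) ^ k := by
    simp [pow_add, simple_mul_simple_pow]
  rw [simplePerm_mul_pow_apply, simple_mul_simple_pow, two_mul, Finset.sum_range_add]
  simp [hperiodic, CharTwo.add_self_eq_zero]

def permRep : W →* Equiv.Perm (W × ZMod 2) :=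
  cs.lift ⟨cs.simplePerm, cs.isLiftable_simplePerm⟩

theorem permRep_wordProd_apply (ω : List B) (t : W) (ε : ZMod 2) :
    cs.permRep (π ω) (t, ε) = (π ω * t * (π ω)⁻¹, ε + (ris ω).count t) := by
  induction ω generalizing t ε with
  | nil => simp [rightInvSeq]
  | cons i ω ih =>
    rw [wordProd_cons, map_mul, Equiv.Perm.mul_apply, ih, permRep,
      lift_apply_simple cs cs.isLiftable_simplePerm, simplePerm_apply]
    refine Prod.ext (by simp [mul_assoc]) ?_
    have hfix : π ω * t * (π ω)⁻¹ = s i ↔ (π ω)⁻¹ * s i * π ω = t := by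
      rw [mul_mul_inv_eq_iff_eq_inv_mul_mul, eq_comm]
    simp only [rightInvSeq, List.count_cons, beq_iff_eq, hfix]
    push_cast
    ring

theorem count_rightInvSeq_eq_of_wordProd_eq {ω ω' : List B} (h : π ω = π ω') (t : W) :
    ((ris ω).count t : ZMod 2) = (ris ω').count t := by
  have h₁ := cs.permRep_wordProd_apply ω t 0
  rw [h, cs.permRep_wordProd_apply ω' t 0] at h₁
  simpa using (congrArg Prod.snd h₁).symm

theorem count_leftInvSeq_eq_of_wordProd_eq {ω ω' : List B} (h : π ω = π ω') (t : W) :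
    ((lis ω).count t : ZMod 2) = (lis ω').count t := by
  have hrev : π ω.reverse = π ω'.reverse := by simp [wordProd_reverse, h]
  simpa [rightInvSeq_reverse] using cs.count_rightInvSeq_eq_of_wordProd_eq hrev t

end PermRep

/-- The exchange property: `s i` occurs exactly once in the left inversion sequence of a reduced
word for `π ω` beginning with `i`, hence an odd number of times in `lis ω`. -/
theorem exists_simple_mul_wordProd_eq_wordProd_eraseIdx {ω : List B} {i : B}
    (h : cs.IsLeftDescent (π ω) i) : ∃ j < ω.length, s i * π ω = π (ω.eraseIdx j) := by
  classical
  obtain ⟨ω', hω', hprod⟩ := cs.exists_isReduced (s i * π ω)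
  have hword : π (i :: ω') = π ω := by rw [wordProd_cons, ← hprod, simple_mul_simple_cancel_left]
  have hred : cs.IsReduced (i :: ω') := by
    have := cs.isLeftDescent_iff.mp h
    rw [IsReduced, hword, length_cons, ← hω'.eq, ← hprod]
    omega
  have hcount : (lis (i :: ω')).count (s i) = 1 :=
    List.count_eq_one_of_mem hred.nodup_leftInvSeq List.mem_cons_self
  have hmem : s i ∈ lis ω := by
    by_contra hnot
    have := cs.count_leftInvSeq_eq_of_wordProd_eq hword (s i)
    rw [hcount, List.count_eq_zero_of_not_mem hnot] at this
    exact absurd this (by decide)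
  obtain ⟨j, hj, hget⟩ := List.getElem_of_mem hmem
  refine ⟨j, by simpa using hj, ?_⟩
  rw [← getD_leftInvSeq_mul_wordProd, List.getD_eq_getElem _ _ hj, hget]

theorem length_wordProd_eraseIdx_lt {ω : List B} {j : ℕ} (hj : j < ω.length) :
    ℓ (π (ω.eraseIdx j)) < ω.length :=
  (cs.length_wordProd_le _).trans_lt (by have := List.length_eraseIdx_add_one hj; omega)

/-- The exchange property applied to a concatenation `ω ++ ω'`: the deleted letter lies either
in `ω` or in `ω'`. -/
theorem length_simple_mul_lt_or_length_conj_mul_lt {ω ω' : List B} {i : B}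
    (h : cs.IsLeftDescent (π ω * π ω') i) :
    ℓ (s i * π ω) < ω.length ∨ ℓ ((π ω)⁻¹ * s i * π ω * π ω') < ω'.length := by
  rw [← wordProd_append] at h
  obtain ⟨j, hj, hexch⟩ := cs.exists_simple_mul_wordProd_eq_wordProd_eraseIdx h
  by_cases hjω : j < ω.length
  · left
    rw [List.eraseIdx_append_of_lt_length hjω, wordProd_append, wordProd_append, ← mul_assoc,
      mul_left_inj] at hexch
    exact hexch ▸ cs.length_wordProd_eraseIdx_lt hjω
  · right
    rw [List.eraseIdx_append_of_length_le (not_lt.mp hjω), wordProd_append, wordProd_append]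
      at hexch
    rw [List.length_append] at hj
    rw [mul_assoc _ (π ω), mul_assoc, hexch, inv_mul_cancel_left]
    exact cs.length_wordProd_eraseIdx_lt (by omega)

variable {J : Set B}

theorem wordProd_mem_closure_simple_image {ω : List B} (hω : ∀ i ∈ ω, i ∈ J) :
    π ω ∈ Subgroup.closure (cs.simple '' J) :=
  (Subgroup.closure _).list_prod_mem (fun x hx => by
    obtain ⟨i, hi, rfl⟩ := List.mem_map.mp hx
    exact Subgroup.subset_closure (Set.mem_image_of_mem _ (hω i hi)))

theorem exists_isReduced_simple_mul {ω : List B} (hred : cs.IsReduced ω) (hω : ∀ k ∈ ω, k ∈ J)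
    {i : B} (hi : i ∈ J) :
    ∃ ω' : List B, cs.IsReduced ω' ∧ (∀ k ∈ ω', k ∈ J) ∧ π ω' = s i * π ω := by
  by_cases hdesc : cs.IsLeftDescent (π ω) i
  · obtain ⟨j, hj, hexch⟩ := cs.exists_simple_mul_wordProd_eq_wordProd_eraseIdx hdesc
    refine ⟨ω.eraseIdx j, ?_, fun k hk => hω k ((ω.eraseIdx_sublist j).mem hk), hexch.symm⟩
    have hshorter := cs.isLeftDescent_iff.mp hdesc
    have hlen := List.length_eraseIdx_add_one hj
    rw [hred.eq] at hshorter
    rw [IsReduced, ← hexch]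
    omega
  · refine ⟨i :: ω, ?_, by simpa [hi] using hω, wordProd_cons _ _ _⟩
    rw [IsReduced, wordProd_cons, cs.not_isLeftDescent_iff.mp hdesc, hred.eq, length_cons]

theorem exists_isReduced_of_mem_closure {u : W} (hu : u ∈ Subgroup.closure (cs.simple '' J)) :
    ∃ ω : List B, cs.IsReduced ω ∧ (∀ i ∈ ω, i ∈ J) ∧ π ω = u := by
  induction hu using Subgroup.closure_induction_left with
  | one => exact ⟨[], by simp [IsReduced], by simp, rfl⟩
  | mul_left x hx y _ ih =>
    obtain ⟨i, hi, rfl⟩ := hx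
    obtain ⟨ω, hred, hω, rfl⟩ := ih
    exact cs.exists_isReduced_simple_mul hred hω hi
  | inv_mul_cancel x hx y _ ih =>
    obtain ⟨i, hi, rfl⟩ := hx
    obtain ⟨ω, hred, hω, rfl⟩ := ih
    simpa using cs.exists_isReduced_simple_mul hred hω hi

theorem length_mul_eq_add_of_forall_length_le {w : W}
    (hmin : ∀ v ∈ Subgroup.closure (cs.simple '' J), ℓ w ≤ ℓ (v * w)) {u : W}
    (hu : u ∈ Subgroup.closure (cs.simple '' J)) : ℓ (u * w) = ℓ u + ℓ w := by
  obtain ⟨ω, hred, hω, rfl⟩ := cs.exists_isReduced_of_mem_closure hu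
  rw [hred.eq]
  clear hu
  induction ω with
  | nil => simp
  | cons i ω ih =>
    have hred' : cs.IsReduced ω := by simpa using hred.drop 1
    have hi : i ∈ J := hω i List.mem_cons_self
    have hω' : ∀ k ∈ ω, k ∈ J := fun k hk => hω k (List.mem_cons_of_mem i hk)
    have ih := ih hred' hω'
    rw [wordProd_cons, mul_assoc, length_cons]
    rcases cs.length_simple_mul (π ω * w) i with hup | hdown
    · omega
    exfalso
    obtain ⟨ν, hν, rfl⟩ := cs.exists_isReduced w
    have hdesc : cs.IsLeftDescent (π ω * π ν) i := by
      rw [isLeftDescent_iff]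
      omega
    rcases cs.length_simple_mul_lt_or_length_conj_mul_lt hdesc with hlt | hlt
    · have := hred.eq
      rw [wordProd_cons, length_cons] at this
      omega
    · have hconj : (π ω)⁻¹ * s i * π ω ∈ Subgroup.closure (cs.simple '' J) :=
        have hmem := cs.wordProd_mem_closure_simple_image hω'
        mul_mem (mul_mem (inv_mem hmem) (Subgroup.subset_closure ⟨i, hi, rfl⟩)) hmem
      have := hmin _ hconj
      rw [hν.eq] at this
      omega

theorem length_le_length_mul_of_forall_length_le_simple_mul {w : W}
    (hw : ∀ i ∈ J, ℓ w ≤ ℓ (s i * w)) {v : W} (hv : v ∈ Subgroup.closure (cs.simple '' J)) :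
    ℓ w ≤ ℓ (v * w) := by
  set K := Subgroup.closure (cs.simple '' J)
  -- `v₀ * w` is a shortest element of `W_J w`; the descent hypothesis forces `v₀ = 1`.
  obtain ⟨v₀, hv₀, hshortest⟩ :=
    (InvImage.wf (fun v => ℓ (v * w)) wellFounded_lt).has_min (K : Set W) ⟨1, one_mem K⟩
  have hmin : ∀ v ∈ K, ℓ (v₀ * w) ≤ ℓ (v * (v₀ * w)) := fun v hv => by
    simpa [InvImage, mul_assoc] using hshortest (v * v₀) (mul_mem hv hv₀)
  obtain ⟨ω, hred, hω, hprod⟩ := cs.exists_isReduced_of_mem_closure (inv_mem hv₀)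
  have hsplit := cs.length_mul_eq_add_of_forall_length_le hmin (inv_mem hv₀)
  rw [inv_mul_cancel_left, ← hprod, hred.eq] at hsplit
  cases ω with
  | nil =>
    have hv₀1 : v₀ = 1 := by simpa [eq_comm] using hprod
    simpa [hv₀1] using hmin v hv
  | cons i ω =>
    exfalso
    have hw' : w = s i * (π ω * (v₀ * w)) := by
      rw [← mul_assoc, ← wordProd_cons, hprod, inv_mul_cancel_left]
    have hsi : s i * w = π ω * (v₀ * w) := by
      conv_lhs => rw [hw']
      exact cs.simple_mul_simple_cancel_left i
    have hred' : cs.IsReduced ω := by simpa using hred.drop 1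
    have hlen := hw i (hω i List.mem_cons_self)
    rw [hsi, cs.length_mul_eq_add_of_forall_length_le hmin
      (cs.wordProd_mem_closure_simple_image fun k hk => hω k (List.mem_cons_of_mem i hk)),
      hred'.eq] at hlen
    rw [length_cons] at hsplit
    omega

end CoxeterSystem

theorem stmt_1_general {B W : Type*} [Group W] {M : CoxeterMatrix B}
    (cs : CoxeterSystem M W) (J : Set B) (w : W)
    (hw : ∀ b ∈ J, cs.length w ≤ cs.length (cs.simple b * w)) :
    ∀ u ∈ Subgroup.closure (cs.simple '' J),
      cs.length u ≤ cs.length (w⁻¹ * u * w) := by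
  intro u hu
  have hsplit := cs.length_mul_eq_add_of_forall_length_le
    (fun v hv => cs.length_le_length_mul_of_forall_length_le_simple_mul hw hv) hu
  have hle : cs.length u + cs.length w ≤ cs.length w + cs.length (w⁻¹ * u * w) :=
    calc cs.length u + cs.length w = cs.length (w * (w⁻¹ * u * w)) := by
          rw [← hsplit]
          group
      _ ≤ cs.length w + cs.length (w⁻¹ * u * w) := cs.length_mul_le _ _
  omega

/-- If `w` is a minimal length coset representative for `W_J` (i.e. `ℓ(sw) ≥ ℓ(w)` for all
`s ∈ J`), then conjugation by `w` does not decrease length on the parabolic subgroup `W_J`. -/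
theorem stmt_1 {B W : Type*} [Group W] [Finite W] {M : CoxeterMatrix B}
    (cs : CoxeterSystem M W) (J : Set B) (w : W)
    (hw : ∀ b ∈ J, cs.length w ≤ cs.length (cs.simple b * w)) :
    ∀ u ∈ Subgroup.closure (cs.simple '' J),
      cs.length u ≤ cs.length (w⁻¹ * u * w) :=
  stmt_1_general cs J w hw
end

section
/- Let w have minimal length in its conjugacy class in a finite Coxeter group W. Then for v ∈ W, the equality J(v⁻¹wv) = D(v⁻¹) holds if and only if v is the longest element of W_{J(w)}. -/
/-- The set `J(w)` of simple reflections occurring in a reduced expression for `w`. -/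
def coxSupport {B W : Type*} [Group W] {M : CoxeterMatrix B}
    (cs : CoxeterSystem M W) (w : W) : Set B :=
  {b : B | ∃ ω : List B, cs.IsReduced ω ∧ cs.wordProd ω = w ∧ b ∈ ω}

/-!
Write `K = J(v⁻¹ w v)` and let `w₀` be the longest element of `W_K`. If the right descent set
of `v` is `K`, then `v = u w₀` where `u` is the shortest element of `v W_K`, and
`y = w₀ (v⁻¹ w v) w₀ = u⁻¹ w u` again has `J(y) = K`. As `u` has no inversion in `W_K`,
`ℓ(u y u⁻¹) ≥ ℓ(y)`, so minimality of `w` forces equality. Following this equality along the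
prefixes of a reduced word of `y` shows that `u` conjugates every `s_k`, `k ∈ K`, to a simple
reflection, hence `ℓ(u w₀ u⁻¹) ≤ ℓ(w₀)`. A right descent of `u` would then be a right descent
of `v = u w₀` outside `K`, so `u = 1`, `v = w₀` and `J(w) = J(y) = K`. Conversely, conjugation
by `w₀` permutes `{s_k | k ∈ K}` and the right descent set of `w₀` is `K`.

Inversion sets are controlled through Tits' sign cocycle on `W × {±1}`, which yields the strong
exchange property.
-/

open List

namespace CoxeterSystem

variable {B W : Type*} [Group W] {M : CoxeterMatrix B} (cs : CoxeterSystem M W)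

local prefix:100 "s " => cs.simple
local prefix:100 "π " => cs.wordProd
local prefix:100 "ℓ " => cs.length
local prefix:100 "lis " => cs.leftInvSeq

lemma alternatingWord_two_mul_succ (i j : B) (m : ℕ) :
    alternatingWord i j (2 * (m + 1)) = i :: j :: alternatingWord i j (2 * m) := by
  rw [show 2 * (m + 1) = 2 * m + 1 + 1 by ring, alternatingWord_succ', alternatingWord_succ']
  simp [parity_simps]

lemma prod_map_alternatingWord_two_mul {G : Type*} [Monoid G] (f : B → G) (i j : B) (m : ℕ) :
    ((alternatingWord i j (2 * m)).map f).prod = (f i * f j) ^ m := by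
  induction m with
  | zero => simp [alternatingWord]
  | succ m ih => simp [alternatingWord_two_mul_succ, ih, pow_succ', mul_assoc]

lemma getElem_leftInvSeq_alternatingWord_eq_mul_pow (i j : B) (p k : ℕ) (hk : k < 2 * p) :
    (lis (alternatingWord i j (2 * p)))[k]'(by simpa using hk) = s i * (s j * s i) ^ k := by
  rw [getElem_leftInvSeq_alternatingWord cs i j p k hk, prod_alternatingWord_eq_mul_pow]
  simp [show (2 * k + 1) / 2 = k by omega, parity_simps]

-- The reflections `s i (s j s i)^k` of the dihedral subgroup are `M i j`-periodic in `k`.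
lemma exists_leftInvSeq_alternatingWord_eq_append (i j : B) :
    ∃ L : List W, lis (alternatingWord i j (2 * M i j)) = L ++ L := by
  set m := M i j
  refine ⟨(lis (alternatingWord i j (2 * m))).take m, ext_getElem (by simp; omega) ?_⟩
  intro k hk _
  simp only [length_leftInvSeq, length_alternatingWord] at hk
  rw [getElem_append, getElem_leftInvSeq_alternatingWord_eq_mul_pow cs i j _ k hk]
  split_ifs with h
  · simp [getElem_leftInvSeq_alternatingWord_eq_mul_pow cs i j _ k hk]
  · simp only [length_take, length_leftInvSeq, length_alternatingWord] at h
    rw [getElem_take, getElem_leftInvSeq_alternatingWord_eq_mul_pow cs i j _ _ (by simp; omega)]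
    obtain ⟨r, rfl⟩ : ∃ r, k = m + r := ⟨k - m, by omega⟩
    simp [show min m (2 * m) = m by omega, pow_add, m]

lemma isLeftInversion_conj_iff (w t : W) :
    cs.IsLeftInversion w (w * t * w⁻¹) ↔ cs.IsRightInversion w t := by
  simp [IsLeftInversion, IsRightInversion, isReflection_conj_iff]

section ReflectionRepresentation

variable [DecidableEq W]

-- Tits' construction: `reflSign w t = -1` will mean that `t` is a right inversion of `w`.
def reflPerm (i : B) : Equiv.Perm (W × ℤˣ) :=
  Function.Involutive.toPerm (fun p ↦ (s i * p.1 * s i, if p.1 = s i then -p.2 else p.2)) <| by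
    rintro ⟨t, ε⟩
    by_cases h : t = s i <;> simp [h, mul_assoc, mul_eq_one_iff_eq_inv]

lemma reflPerm_apply (i : B) (t : W) (ε : ℤˣ) :
    cs.reflPerm i (t, ε) = (s i * t * s i, if t = s i then -ε else ε) := rfl

lemma prod_map_reflPerm (ω : List B) (t : W) (ε : ℤˣ) :
    (ω.map cs.reflPerm).prod (t, ε) =
      (π ω * t * (π ω)⁻¹, (-1) ^ (lis ω).count (π ω * t * (π ω)⁻¹) * ε) := by
  induction ω with
  | nil => simp
  | cons i ω ih =>
    set t' := π ω * t * (π ω)⁻¹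
    have hconj : π (i :: ω) * t * (π (i :: ω))⁻¹ = MulAut.conj (s i) t' := by
      simp [t', wordProd_cons, mul_assoc]
    have hhead : (s i == MulAut.conj (s i) t') = decide (t' = s i) := by
      rw [_root_.beq_eq_decide, decide_eq_decide, MulAut.conj_apply, eq_comm,
        mul_inv_eq_iff_eq_mul, mul_right_inj]
    rw [map_cons, prod_cons, Equiv.Perm.mul_apply, ih, reflPerm_apply, hconj, leftInvSeq,
      count_cons, count_map_of_injective _ _ (MulAut.conj (s i)).injective, hhead]
    by_cases h : t' = s i <;> simp [h, pow_succ]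

lemma isLiftable_reflPerm : M.IsLiftable cs.reflPerm := by
  intro i j
  obtain ⟨L, hL⟩ := cs.exists_leftInvSeq_alternatingWord_eq_append i j
  have hπ : π (alternatingWord i j (2 * M i j)) = 1 := by
    rw [wordProd, prod_map_alternatingWord_two_mul, simple_mul_simple_pow]
  ext ⟨t, ε⟩ : 1
  rw [← prod_map_alternatingWord_two_mul, prod_map_reflPerm, hL, count_append, hπ]
  simp [← two_mul, pow_mul]

def reflRep : W →* Equiv.Perm (W × ℤˣ) := cs.lift ⟨cs.reflPerm, cs.isLiftable_reflPerm⟩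

lemma reflRep_wordProd (ω : List B) : cs.reflRep (π ω) = (ω.map cs.reflPerm).prod := by
  rw [wordProd, map_list_prod, map_map]
  congr 1
  exact map_congr_left fun i _ ↦ cs.lift_apply_simple cs.isLiftable_reflPerm i

def reflSign (w t : W) : ℤˣ := (cs.reflRep w (t, 1)).2

lemma reflSign_wordProd (ω : List B) (t : W) :
    cs.reflSign (π ω) t = (-1) ^ (lis ω).count (π ω * t * (π ω)⁻¹) := by
  simp [reflSign, reflRep_wordProd, prod_map_reflPerm]

lemma reflRep_apply (w t : W) (ε : ℤˣ) :
    cs.reflRep w (t, ε) = (w * t * w⁻¹, cs.reflSign w t * ε) := by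
  obtain ⟨ω, rfl⟩ := cs.wordProd_surjective w
  simp [reflRep_wordProd, prod_map_reflPerm, reflSign_wordProd]

lemma reflSign_mul (u v t : W) :
    cs.reflSign (u * v) t = cs.reflSign u (v * t * v⁻¹) * cs.reflSign v t := by
  have h := congrArg (fun σ ↦ (σ (t, 1)).2) (map_mul cs.reflRep u v)
  simp only [Equiv.Perm.mul_apply, reflRep_apply, mul_one] at h
  rw [h, mul_comm]

lemma reflSign_one (t : W) : cs.reflSign 1 t = 1 := by
  simp [reflSign]

lemma reflSign_simple_self (i : B) : cs.reflSign (s i) (s i) = -1 := by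
  simp [reflSign, reflRep, reflPerm_apply]

lemma reflSign_self {t : W} (ht : cs.IsReflection t) : cs.reflSign t t = -1 := by
  obtain ⟨g, i, rfl⟩ := ht
  -- compare the cocycle expansions of `g x g⁻¹` for `x = s i` and `x = 1`
  have key : ∀ x : W, cs.reflSign (g * x * g⁻¹) (g * s i * g⁻¹) = cs.reflSign x (s i) *
      (cs.reflSign g (x * s i * x⁻¹) * cs.reflSign g⁻¹ (g * s i * g⁻¹)) := by
    intro x
    have hgi : g⁻¹ * (g * s i * g⁻¹) * g = s i := by group
    rw [reflSign_mul, reflSign_mul, inv_inv, hgi]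
    ac_rfl
  have h1 := key 1
  have hi := key (s i)
  simp only [mul_one, mul_inv_cancel, one_mul, inv_one, reflSign_one] at h1
  rw [mul_inv_cancel_right, reflSign_simple_self] at hi
  rw [hi, ← h1, mul_one]

lemma reflSign_eq_neg_one_iff_mem_leftInvSeq {ω : List B} (hω : cs.IsReduced ω) (t : W) :
    cs.reflSign (π ω) t = -1 ↔ π ω * t * (π ω)⁻¹ ∈ lis ω := by
  rw [reflSign_wordProd]
  by_cases h : π ω * t * (π ω)⁻¹ ∈ lis ω
  · simp [h, count_eq_one_of_mem hω.nodup_leftInvSeq h]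
  · simp [h, count_eq_zero_of_not_mem h]

lemma isRightInversion_of_reflSign_eq_neg_one {w t : W} (h : cs.reflSign w t = -1) :
    cs.IsRightInversion w t := by
  obtain ⟨ω, hω, rfl⟩ := cs.exists_isReduced w
  rw [← isLeftInversion_conj_iff]
  exact cs.isLeftInversion_of_mem_leftInvSeq hω
    ((cs.reflSign_eq_neg_one_iff_mem_leftInvSeq hω t).mp h)

theorem reflSign_eq_neg_one_iff {w t : W} : cs.reflSign w t = -1 ↔ cs.IsRightInversion w t := by
  refine ⟨cs.isRightInversion_of_reflSign_eq_neg_one, fun h ↦ ?_⟩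
  have hmul : cs.reflSign w t = cs.reflSign (w * t) t * -1 := by
    simpa [mul_assoc, h.1.mul_self, h.1.inv, cs.reflSign_self h.1] using
      cs.reflSign_mul (w * t) t t
  rcases Int.units_eq_one_or (cs.reflSign w t) with h1 | h1
  · rw [h1, mul_neg_one] at hmul
    have := cs.isRightInversion_of_reflSign_eq_neg_one (neg_eq_iff_eq_neg.mp hmul.symm)
    exact absurd h (h.1.isRightInversion_mul_left_iff.mp this)
  · exact h1

end ReflectionRepresentation

theorem isLeftInversion_iff_mem_leftInvSeq {ω : List B} (hω : cs.IsReduced ω) {t : W} :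
    cs.IsLeftInversion (π ω) t ↔ t ∈ lis ω := by
  classical
  refine ⟨fun h ↦ ?_, cs.isLeftInversion_of_mem_leftInvSeq hω⟩
  have := (cs.reflSign_eq_neg_one_iff_mem_leftInvSeq hω ((π ω)⁻¹ * t * π ω)).mp
    (cs.reflSign_eq_neg_one_iff.mpr (by rw [← isLeftInversion_conj_iff]; simpa [mul_assoc]))
  simpa [mul_assoc] using this

theorem isRightInversion_mul_iff (u v t : W) :
    cs.IsRightInversion (u * v) t ↔
      Xor (cs.IsRightInversion u (v * t * v⁻¹)) (cs.IsRightInversion v t) := by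
  classical
  simp only [← reflSign_eq_neg_one_iff, reflSign_mul]
  rcases Int.units_eq_one_or (cs.reflSign u (v * t * v⁻¹)) with h | h <;>
    rcases Int.units_eq_one_or (cs.reflSign v t) with h' | h' <;> simp [h, h', Xor]

lemma setOf_isRightInversion_inv_wordProd {ω : List B} (hω : cs.IsReduced ω) :
    {t | cs.IsRightInversion (π ω)⁻¹ t} = {t | t ∈ lis ω} := by
  ext t
  simp [isRightInversion_inv_iff, cs.isLeftInversion_iff_mem_leftInvSeq hω]

theorem finite_setOf_isRightInversion (w : W) : {t | cs.IsRightInversion w t}.Finite := by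
  obtain ⟨ω, hω, hw⟩ := cs.exists_isReduced w⁻¹
  classical
  rw [← inv_inv w, hw, cs.setOf_isRightInversion_inv_wordProd hω, ← coe_toFinset]
  exact Finset.finite_toSet _

theorem ncard_setOf_isRightInversion (w : W) : {t | cs.IsRightInversion w t}.ncard = ℓ w := by
  obtain ⟨ω, hω, hw⟩ := cs.exists_isReduced w⁻¹
  classical
  rw [← inv_inv w, hw, cs.setOf_isRightInversion_inv_wordProd hω, ← coe_toFinset,
    Set.ncard_coe_finset, toFinset_card_of_nodup hω.nodup_leftInvSeq, length_leftInvSeq,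
    length_inv, hω]

theorem exists_isReduced_sublist (ω : List B) :
    ∃ ω', ω' <+ ω ∧ cs.IsReduced ω' ∧ π ω' = π ω := by
  induction ω with
  | nil => exact ⟨[], Sublist.slnil, by simp [IsReduced], rfl⟩
  | cons i ρ ih =>
    obtain ⟨ρ', hsub, hred, hprod⟩ := ih
    by_cases h : cs.IsLeftDescent (π ρ') i
    · obtain ⟨j, hj, hget⟩ := mem_iff_getElem.mp
        ((cs.isLeftInversion_iff_mem_leftInvSeq hred).mp ⟨cs.isReflection_simple i, h⟩)
      have herase : π (ρ'.eraseIdx j) = s i * π ρ' := by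
        rw [← getD_leftInvSeq_mul_wordProd, getD_eq_getElem _ _ hj, hget]
      refine ⟨ρ'.eraseIdx j, (eraseIdx_sublist _ _).trans (hsub.cons i), ?_, ?_⟩
      · have := cs.isLeftDescent_iff.mp h
        simp only [length_leftInvSeq] at hj
        rw [IsReduced, herase, length_eraseIdx_of_lt hj]
        rw [hred] at this
        omega
      · rw [herase, hprod, wordProd_cons]
    · refine ⟨i :: ρ', hsub.cons_cons i, ?_, by rw [wordProd_cons, wordProd_cons, hprod]⟩
      have := cs.not_isLeftDescent_iff.mp h
      rw [IsReduced, wordProd_cons, this, hred, length_cons]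

def parabolic (K : Set B) : Subgroup W := Subgroup.closure (cs.simple '' K)

variable {cs}

lemma simple_mem_parabolic {K : Set B} {i : B} (hi : i ∈ K) : s i ∈ cs.parabolic K :=
  Subgroup.subset_closure ⟨i, hi, rfl⟩

lemma wordProd_mem_parabolic {K : Set B} {ω : List B} (hω : ∀ b ∈ ω, b ∈ K) :
    π ω ∈ cs.parabolic K := by
  induction ω with
  | nil => exact one_mem _
  | cons i ω ih =>
    rw [wordProd_cons]
    exact mul_mem (simple_mem_parabolic (hω i mem_cons_self))
      (ih fun b hb ↦ hω b (mem_cons_of_mem i hb))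

lemma exists_wordProd_eq_of_mem_parabolic {K : Set B} {w : W} (hw : w ∈ cs.parabolic K) :
    ∃ ω : List B, (∀ b ∈ ω, b ∈ K) ∧ π ω = w := by
  induction hw using Subgroup.closure_induction with
  | mem x hx =>
    obtain ⟨b, hb, rfl⟩ := hx
    exact ⟨[b], by simpa using hb, cs.wordProd_singleton b⟩
  | one => exact ⟨[], by simp, cs.wordProd_nil⟩
  | mul x y _ _ hx hy =>
    obtain ⟨ω₁, h₁, rfl⟩ := hx
    obtain ⟨ω₂, h₂, rfl⟩ := hy
    exact ⟨ω₁ ++ ω₂, by simpa [or_imp, forall_and] using And.intro h₁ h₂,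
      cs.wordProd_append ω₁ ω₂⟩
  | inv x _ hx =>
    obtain ⟨ω, h, rfl⟩ := hx
    exact ⟨ω.reverse, by simpa using h, cs.wordProd_reverse ω⟩

lemma exists_isReduced_of_mem_parabolic {K : Set B} {w : W} (hw : w ∈ cs.parabolic K) :
    ∃ ω : List B, cs.IsReduced ω ∧ (∀ b ∈ ω, b ∈ K) ∧ π ω = w := by
  obtain ⟨ω, hK, rfl⟩ := exists_wordProd_eq_of_mem_parabolic hw
  obtain ⟨ω', hsub, hred, hprod⟩ := cs.exists_isReduced_sublist ω
  exact ⟨ω', hred, fun b hb ↦ hK b (hsub.subset hb), hprod⟩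

lemma leftInvSeq_subset_parabolic {K : Set B} {ω : List B} (hω : ∀ b ∈ ω, b ∈ K) :
    ∀ t ∈ lis ω, t ∈ cs.parabolic K := by
  induction ω with
  | nil => simp
  | cons i ω ih =>
    have hi := simple_mem_parabolic (cs := cs) (hω i mem_cons_self)
    simp only [leftInvSeq, mem_cons, mem_map, forall_eq_or_imp, forall_exists_index, and_imp,
      forall_apply_eq_imp_iff₂, MulAut.conj_apply]
    have ih' := ih fun b hb ↦ hω b (mem_cons_of_mem i hb)
    exact ⟨hi, fun t ht ↦ mul_mem (mul_mem hi (ih' t ht)) (inv_mem hi)⟩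

lemma mem_parabolic_of_isLeftInversion {K : Set B} {w t : W} (hw : w ∈ cs.parabolic K)
    (ht : cs.IsLeftInversion w t) : t ∈ cs.parabolic K := by
  obtain ⟨ω, hred, hK, rfl⟩ := exists_isReduced_of_mem_parabolic hw
  exact leftInvSeq_subset_parabolic hK t ((cs.isLeftInversion_iff_mem_leftInvSeq hred).mp ht)

lemma mem_parabolic_of_isRightInversion {K : Set B} {w t : W} (hw : w ∈ cs.parabolic K)
    (ht : cs.IsRightInversion w t) : t ∈ cs.parabolic K :=
  mem_parabolic_of_isLeftInversion (inv_mem hw) (cs.isLeftInversion_inv_iff.mpr ht)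

lemma conj_mem_parabolic_iff {K : Set B} {g t : W} (hg : g ∈ cs.parabolic K) :
    g * t * g⁻¹ ∈ cs.parabolic K ↔ t ∈ cs.parabolic K := by
  refine ⟨fun h ↦ ?_, fun h ↦ mul_mem (mul_mem hg h) (inv_mem hg)⟩
  simpa [mul_assoc] using mul_mem (mul_mem (inv_mem hg) h) hg

lemma exists_isRightDescent_mem_of_mem_parabolic {K : Set B} {g : W} (hg : g ∈ cs.parabolic K)
    (hg1 : g ≠ 1) : ∃ k ∈ K, cs.IsRightDescent g k := by
  obtain ⟨ω, hred, hK, rfl⟩ := exists_isReduced_of_mem_parabolic hg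
  obtain ⟨ω₀, k, rfl⟩ := ω.eq_nil_or_concat.resolve_left (by rintro rfl; exact hg1 rfl)
  rw [concat_eq_append] at hred hK ⊢
  refine ⟨k, hK k (by simp), ?_⟩
  have := cs.length_wordProd_le ω₀
  rw [IsRightDescent, hred.eq, wordProd_append, wordProd_singleton,
    simple_mul_simple_cancel_right, length_append, length_singleton]
  omega

-- Automatic once `cs.simple` is known to be injective.
variable (cs) in
def IsSaturated (K : Set B) : Prop := ∀ ⦃b c : B⦄, s b = s c → b ∈ K → c ∈ K

lemma IsSaturated.mem_of_simple_mem_parabolic {K : Set B} (hK : cs.IsSaturated K) {b : B}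
    (h : s b ∈ cs.parabolic K) : b ∈ K := by
  obtain ⟨ω, hred, hωK, hω⟩ := exists_isReduced_of_mem_parabolic h
  have hlen : ω.length = 1 := by rw [← hred.eq, hω, length_simple]
  obtain ⟨c, rfl⟩ := List.length_eq_one_iff.mp hlen
  exact hK (by simpa using hω) (hωK c mem_cons_self)

lemma mem_coxSupport {ω : List B} (hω : cs.IsReduced ω) {b : B} (hb : b ∈ ω) :
    b ∈ coxSupport cs (π ω) :=
  ⟨ω, hω, rfl, hb⟩

lemma mem_parabolic_coxSupport (w : W) : w ∈ cs.parabolic (coxSupport cs w) := by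
  obtain ⟨ω, hω, rfl⟩ := cs.exists_isReduced w
  exact wordProd_mem_parabolic fun b hb ↦ mem_coxSupport hω hb

lemma isSaturated_coxSupport (w : W) : cs.IsSaturated (coxSupport cs w) := by
  rintro b c hbc ⟨ω, hω, rfl, hb⟩
  obtain ⟨ω₁, ω₂, rfl⟩ := append_of_mem hb
  have hπ : π (ω₁ ++ c :: ω₂) = π (ω₁ ++ b :: ω₂) := by
    simp only [wordProd_append, wordProd_cons, hbc]
  refine ⟨ω₁ ++ c :: ω₂, ?_, hπ, by simp⟩
  rw [IsReduced, hπ, hω.eq]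
  simp

lemma coxSupport_subset {K : Set B} (hK : cs.IsSaturated K) {w : W}
    (hw : w ∈ cs.parabolic K) : coxSupport cs w ⊆ K := by
  rintro b ⟨ω, hred, rfl, hb⟩
  have htake : ∀ j (hj : j < ω.length), π (ω.take (j + 1)) = π (ω.take j) * s ω[j] := by
    intro j hj
    rw [take_succ_eq_append_getElem hj, wordProd_append, wordProd_singleton]
  have hprefix : ∀ j, π (ω.take j) ∈ cs.parabolic K := by
    intro j
    induction j with
    | zero => simp [one_mem]
    | succ j ih =>
      rcases lt_or_ge j ω.length with hj | hj
      · have hlis : (lis ω)[j]'(by simpa using hj) * π (ω.take j) = π (ω.take (j + 1)) := by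
          rw [getElem_leftInvSeq, htake j hj, inv_mul_cancel_right]
        rw [← hlis]
        exact mul_mem (mem_parabolic_of_isLeftInversion hw
          (cs.isLeftInversion_of_mem_leftInvSeq hred (getElem_mem _))) ih
      · rwa [take_of_length_le (by omega)] at ih ⊢
  obtain ⟨j, hj, rfl⟩ := mem_iff_getElem.mp hb
  apply hK.mem_of_simple_mem_parabolic
  have : s ω[j] = (π (ω.take j))⁻¹ * π (ω.take (j + 1)) := by
    rw [htake j hj, inv_mul_cancel_left]
  rw [this]
  exact mul_mem (inv_mem (hprefix j)) (hprefix (j + 1))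

lemma conj_wordProd {g : W} {σ : B → B} {ω : List B}
    (h : ∀ b ∈ ω, g * s b * g⁻¹ = s (σ b)) : g * π ω * g⁻¹ = π (ω.map σ) := by
  induction ω with
  | nil => simp
  | cons i ω ih =>
    rw [map_cons, wordProd_cons, wordProd_cons, ← h i mem_cons_self,
      ← ih fun b hb ↦ h b (mem_cons_of_mem i hb)]
    group

lemma length_conj_le {K : Set B} {g z : W} (hg : ∀ k ∈ K, ∃ c, g * s k * g⁻¹ = s c)
    (hz : z ∈ cs.parabolic K) : ℓ (g * z * g⁻¹) ≤ ℓ z := by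
  choose! σ hσ using hg
  obtain ⟨ω, hred, hK, rfl⟩ := exists_isReduced_of_mem_parabolic hz
  rw [conj_wordProd fun b hb ↦ hσ b (hK b hb), hred.eq]
  simpa using cs.length_wordProd_le (ω.map σ)

variable (cs) in
def IsLongest (K : Set B) (w₀ : W) : Prop :=
  w₀ ∈ cs.parabolic K ∧ ∀ z ∈ cs.parabolic K, ℓ z ≤ ℓ w₀

lemma exists_isLongest [Finite W] (K : Set B) : ∃ w₀, cs.IsLongest K w₀ := by
  obtain ⟨⟨w₀, hw₀⟩, h⟩ := Finite.exists_max fun z : cs.parabolic K ↦ ℓ (z : W)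
  exact ⟨w₀, hw₀, fun z hz ↦ h ⟨z, hz⟩⟩

namespace IsLongest

variable {K : Set B} {w₀ : W} (h : cs.IsLongest K w₀)
include h

lemma isRightInversion_iff {t : W} :
    cs.IsRightInversion w₀ t ↔ cs.IsReflection t ∧ t ∈ cs.parabolic K := by
  refine ⟨fun ht ↦ ⟨ht.1, mem_parabolic_of_isRightInversion h.1 ht⟩, fun ⟨ht, htK⟩ ↦ ⟨ht, ?_⟩⟩
  exact lt_of_le_of_ne (h.2 _ (mul_mem h.1 htK)) (ht.length_mul_left_ne w₀)

lemma length_mul_add_length {g : W} (hg : g ∈ cs.parabolic K) :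
    ℓ (w₀ * g) + ℓ g = ℓ w₀ := by
  have hsub : {t | cs.IsRightInversion g t} ⊆ {t | cs.IsRightInversion w₀ t} :=
    fun t ht ↦ h.isRightInversion_iff.mpr ⟨ht.1, mem_parabolic_of_isRightInversion hg ht⟩
  have hset : {t | cs.IsRightInversion (w₀ * g) t} =
      {t | cs.IsRightInversion w₀ t} \ {t | cs.IsRightInversion g t} := by
    ext t
    have := @hsub t
    simp only [Set.mem_ofPred_eq, Set.mem_sdiff, isRightInversion_mul_iff,
      h.isRightInversion_iff, isReflection_conj_iff, conj_mem_parabolic_iff hg, Xor] at this ⊢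
    tauto
  have hcard := cs.ncard_setOf_isRightInversion (w₀ * g)
  rw [hset, Set.ncard_sdiff hsub (cs.finite_setOf_isRightInversion g),
    ncard_setOf_isRightInversion, ncard_setOf_isRightInversion] at hcard
  have := h.2 g hg
  omega

lemma mul_self : w₀ * w₀ = 1 :=
  cs.length_eq_zero_iff.mp (by have := h.length_mul_add_length h.1; omega)

lemma inv_eq : w₀⁻¹ = w₀ :=
  inv_eq_of_mul_eq_one_right h.mul_self

lemma unique {z : W} (hz : cs.IsLongest K z) : z = w₀ := by
  have h1 := h.length_mul_add_length hz.1
  have h2 := le_antisymm (h.2 z hz.1) (hz.2 w₀ h.1)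
  have : w₀ * z = 1 := cs.length_eq_zero_iff.mp (by omega)
  rw [← inv_eq_of_mul_eq_one_right this, h.inv_eq]

lemma isRightDescent_iff (hK : cs.IsSaturated K) {b : B} :
    cs.IsRightDescent w₀ b ↔ b ∈ K := by
  rw [← isRightInversion_simple_iff_isRightDescent, h.isRightInversion_iff]
  exact ⟨fun hb ↦ hK.mem_of_simple_mem_parabolic hb.2,
    fun hb ↦ ⟨cs.isReflection_simple b, simple_mem_parabolic hb⟩⟩

lemma eq_of_forall_isRightDescent {z : W} (hz : z ∈ cs.parabolic K)
    (hdesc : ∀ k ∈ K, cs.IsRightDescent z k) : z = w₀ := by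
  obtain ⟨g, rfl⟩ : ∃ g, z = w₀ * g := ⟨w₀ * z, by rw [← mul_assoc, h.mul_self, one_mul]⟩
  have hg : g ∈ cs.parabolic K := by
    simpa [← mul_assoc, h.mul_self] using mul_mem h.1 hz
  by_contra hne
  obtain ⟨k, hk, hgk⟩ := exists_isRightDescent_mem_of_mem_parabolic hg
    (fun hg1 ↦ hne (by rw [hg1, mul_one]))
  have h1 := h.length_mul_add_length (mul_mem hg (simple_mem_parabolic hk))
  have h2 := h.length_mul_add_length hg
  have := hdesc k hk
  unfold IsRightDescent at this hgk
  rw [mul_assoc] at this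
  omega

lemma length_conj {z : W} (hz : z ∈ cs.parabolic K) : ℓ (w₀ * z * w₀) = ℓ z := by
  have h1 := h.length_mul_add_length (mul_mem hz h.1)
  have h2 := h.length_mul_add_length (inv_mem hz)
  have h3 : ℓ (z * w₀) = ℓ (w₀ * z⁻¹) := by rw [← length_inv, mul_inv_rev, h.inv_eq]
  rw [length_inv] at h2
  rw [mul_assoc]
  omega

lemma exists_conj_simple (hK : cs.IsSaturated K) {k : B} (hk : k ∈ K) :
    ∃ c ∈ K, w₀ * s k * w₀ = s c := by
  obtain ⟨c, hc⟩ := cs.length_eq_one_iff.mp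
    ((h.length_conj (simple_mem_parabolic hk)).trans (cs.length_simple k))
  exact ⟨c, hK.mem_of_simple_mem_parabolic
    (hc ▸ mul_mem (mul_mem h.1 (simple_mem_parabolic hk)) h.1), hc⟩

lemma coxSupport_conj {x : W} (hx : coxSupport cs x = K) :
    coxSupport cs (w₀ * x * w₀) = K := by
  have hK : cs.IsSaturated K := hx ▸ isSaturated_coxSupport x
  have hxK : x ∈ cs.parabolic K := hx ▸ mem_parabolic_coxSupport x
  choose! σ hσK hσ using fun k (hk : k ∈ K) ↦ h.exists_conj_simple hK hk
  have himage : ∀ k ∈ K, σ k ∈ coxSupport cs (w₀ * x * w₀) := by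
    intro k hk
    rw [← hx] at hk
    obtain ⟨ω, hred, rfl, hkω⟩ := hk
    have hmap : w₀ * π ω * w₀ = π (ω.map σ) := by
      have := conj_wordProd (g := w₀) (σ := σ) (ω := ω) fun b hb ↦ by
        rw [h.inv_eq, hσ b (hx ▸ mem_coxSupport hred hb)]
      rwa [h.inv_eq] at this
    rw [hmap]
    refine mem_coxSupport ?_ (mem_map_of_mem hkω)
    rw [IsReduced, ← hmap, length_map, h.length_conj hxK, hred.eq]
  refine (coxSupport_subset hK (mul_mem (mul_mem h.1 hxK) h.1)).antisymm fun k hk ↦ ?_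
  have hσσ : s (σ (σ k)) = s k := by
    rw [← hσ _ (hσK k hk), ← hσ k hk, ← mul_assoc, ← mul_assoc, h.mul_self, one_mul,
      mul_assoc, h.mul_self, mul_one]
  exact isSaturated_coxSupport _ hσσ (himage _ (hσK k hk))

end IsLongest

lemma IsLongest.coxSupport_conj_eq_setOf_isLeftDescent_inv {w w₀ : W}
    (h : cs.IsLongest (coxSupport cs w) w₀) :
    coxSupport cs (w₀⁻¹ * w * w₀) = {b | cs.IsLeftDescent w₀⁻¹ b} := by
  ext b
  rw [h.inv_eq, h.coxSupport_conj rfl, Set.mem_ofPred_eq, ← h.inv_eq, isLeftDescent_inv_iff,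
    h.isRightDescent_iff (isSaturated_coxSupport w)]

-- Stated through inversions; the shortest element of a coset `v W_K` has this property.
variable (cs) in
def IsMinimalCosetRep (K : Set B) (u : W) : Prop :=
  ∀ t, cs.IsRightInversion u t → t ∉ cs.parabolic K

variable (cs) in
lemma exists_isMinimalCosetRep (v : W) (K : Set B) :
    ∃ u, u⁻¹ * v ∈ cs.parabolic K ∧ cs.IsMinimalCosetRep K u := by
  obtain ⟨u, hu, hmin⟩ := exists_minimalFor_of_wellFoundedLT
    (fun u ↦ u⁻¹ * v ∈ cs.parabolic K) cs.length ⟨v, by simp [one_mem]⟩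
  refine ⟨u, hu, fun t ht htK ↦ not_le.mpr ht.2 (hmin ?_ ht.2.le)⟩
  show (u * t)⁻¹ * v ∈ cs.parabolic K
  rw [mul_inv_rev, mul_assoc, ht.1.inv]
  exact mul_mem htK hu

namespace IsMinimalCosetRep

variable {K : Set B} {u : W} (hu : cs.IsMinimalCosetRep K u)
include hu

lemma length_mul {z : W} (hz : z ∈ cs.parabolic K) :
    ℓ (u * z) = ℓ u + ℓ z := by
  refine le_antisymm (cs.length_mul_le u z) ?_
  -- the inversions of `z` and the `z`-conjugates of those of `u` are disjoint inversions of `u z`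
  have hz' : ∀ t, cs.IsRightInversion z t → z * t * z⁻¹ ∈ cs.parabolic K := fun t ht ↦
    (conj_mem_parabolic_iff hz).mpr (mem_parabolic_of_isRightInversion hz ht)
  set Nz := {t | cs.IsRightInversion z t}
  set Nu := (fun r ↦ z⁻¹ * r * z) '' {t | cs.IsRightInversion u t}
  have hsub : Nz ∪ Nu ⊆ {t | cs.IsRightInversion (u * z) t} := by
    rintro t (ht | ⟨r, hr, rfl⟩) <;> rw [Set.mem_ofPred_eq, isRightInversion_mul_iff]
    · exact Or.inr ⟨ht, fun h ↦ hu _ h (hz' t ht)⟩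
    · refine Or.inl ⟨by simpa [mul_assoc] using hr, fun h ↦ hu r hr ?_⟩
      simpa [mul_assoc] using hz' _ h
  have hdisj : Disjoint Nz Nu := by
    refine Set.disjoint_left.mpr ?_
    rintro _ ht ⟨r, hr, rfl⟩
    exact hu r hr (by simpa [mul_assoc] using hz' _ ht)
  have hcard := Set.ncard_le_ncard hsub (cs.finite_setOf_isRightInversion (u * z))
  rwa [Set.ncard_union_eq hdisj (cs.finite_setOf_isRightInversion z)
      ((cs.finite_setOf_isRightInversion u).image _),
    Set.ncard_image_of_injective _ (fun _ _ h ↦ by simpa using h), ncard_setOf_isRightInversion,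
    ncard_setOf_isRightInversion, ncard_setOf_isRightInversion, add_comm] at hcard

lemma isRightDescent_mul_iff {y : W} (hy : y ∈ cs.parabolic K) {k : B} (hk : k ∈ K) :
    cs.IsRightDescent (u * y) k ↔ cs.IsRightDescent y k := by
  rw [IsRightDescent, IsRightDescent, mul_assoc,
    hu.length_mul (mul_mem hy (simple_mem_parabolic hk)),
    hu.length_mul hy, Nat.add_lt_add_iff_left]

lemma length_le_length_conj {y : W} (hy : y ∈ cs.parabolic K) : ℓ y ≤ ℓ (u * y * u⁻¹) := by
  have h1 := hu.length_mul hy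
  have h2 := cs.length_mul_le (u * y * u⁻¹) u
  rw [inv_mul_cancel_right] at h2
  omega

lemma isRightInversion_conj {z t : W} (hz : z ∈ cs.parabolic K) (ht : cs.IsRightInversion z t) :
    cs.IsRightInversion (u * z * u⁻¹) (u * t * u⁻¹) := by
  have htK := mem_parabolic_of_isRightInversion hz ht
  have h1 : cs.IsRightInversion (u * z) t := (isRightInversion_mul_iff cs u z t).mpr
    (Or.inr ⟨ht, fun h ↦ hu _ h ((conj_mem_parabolic_iff hz).mpr htK)⟩)
  rw [← inv_mul_cancel_right (u * z) u, isRightInversion_mul_iff] at h1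
  exact h1.elim And.left fun h ↦ absurd htK (hu t h.1)

lemma length_conj_mul_simple {z : W} (hz : z ∈ cs.parabolic K)
    (hlen : ℓ (u * z * u⁻¹) = ℓ z) {k : B} (hk : k ∈ K) (hdesc : cs.IsRightDescent z k) :
    ℓ (u * (z * s k) * u⁻¹) = ℓ (z * s k) := by
  have hinv := (hu.isRightInversion_conj hz
    ((cs.isRightInversion_simple_iff_isRightDescent z k).mpr hdesc)).2
  rw [show u * z * u⁻¹ * (u * s k * u⁻¹) = u * (z * s k) * u⁻¹ by group, hlen] at hinv
  have := hu.length_le_length_conj (mul_mem hz (simple_mem_parabolic hk))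
  have := cs.isRightDescent_iff.mp hdesc
  omega

lemma length_conj_wordProd_of_prefix {ρ : List B} (hρ : cs.IsReduced ρ) (hρK : ∀ b ∈ ρ, b ∈ K)
    (hlen : ℓ (u * π ρ * u⁻¹) = ℓ (π ρ)) {ρ' : List B} (hpre : ρ' <+: ρ) :
    ℓ (u * π ρ' * u⁻¹) = ℓ (π ρ') := by
  induction ρ using List.reverseRecOn with
  | nil => rwa [prefix_nil.mp hpre]
  | append_singleton ρ₀ b ih =>
    rcases prefix_concat_iff.mp hpre with rfl | hpre₀
    · exact hlen
    have hb : b ∈ K := hρK b (by simp)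
    have hρ₀ : cs.IsReduced ρ₀ := by simpa using hρ.take ρ₀.length
    have hdesc : cs.IsRightDescent (π (ρ₀ ++ [b])) b := by
      have := cs.length_wordProd_le ρ₀
      rw [IsRightDescent, hρ.eq, wordProd_append, wordProd_singleton,
        simple_mul_simple_cancel_right, length_append, length_singleton]
      omega
    have hstep := hu.length_conj_mul_simple (wordProd_mem_parabolic hρK) hlen hb hdesc
    rw [wordProd_append, wordProd_singleton, simple_mul_simple_cancel_right] at hstep
    exact ih hρ₀ (fun c hc ↦ hρK c (mem_append_left _ hc)) hstep hpre₀

lemma exists_conj_simple_eq {ω : List B} (hω : cs.IsReduced ω) (hωK : ∀ b ∈ ω, b ∈ K)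
    (hlen : ℓ (u * π ω * u⁻¹) = ℓ (π ω)) {k : B} (hk : k ∈ ω) :
    ∃ c, u * s k * u⁻¹ = s c := by
  -- the prefix `ω₁ ++ [k]` keeps the length property, and its reverse starts with `k`
  obtain ⟨ω₁, ω₂, rfl⟩ := append_of_mem hk
  have hρ : cs.IsReduced (ω₁ ++ [k]) := by
    simpa [take_append, take_of_length_le] using hω.take (ω₁.length + 1)
  have hρK : ∀ b ∈ ω₁ ++ [k], b ∈ K := fun b hb ↦ hωK b (by simp at hb ⊢; tauto)
  have h1 := hu.length_conj_wordProd_of_prefix hω hωK hlen (ρ' := ω₁ ++ [k]) (by simp)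
  have h2 : ℓ (u * π (ω₁ ++ [k]).reverse * u⁻¹) = ℓ (π (ω₁ ++ [k]).reverse) := by
    rwa [wordProd_reverse, length_inv, ← length_inv, show (u * (π (ω₁ ++ [k]))⁻¹ * u⁻¹)⁻¹ =
      u * π (ω₁ ++ [k]) * u⁻¹ by group]
  have h3 := hu.length_conj_wordProd_of_prefix ((cs.isReduced_reverse_iff _).mpr hρ)
    (fun b hb ↦ hρK b (mem_reverse.mp hb)) h2 (ρ' := [k]) (by simp)
  rw [wordProd_singleton, length_simple] at h3
  exact cs.length_eq_one_iff.mp h3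

lemma isRightDescent_mul_of_isLongest (hconj : ∀ k ∈ K, ∃ c, u * s k * u⁻¹ = s c) {w₀ : W}
    (hw₀ : cs.IsLongest K w₀) {c : B} (hc : cs.IsRightDescent u c) :
    cs.IsRightDescent (u * w₀) c := by
  have h1 := length_conj_le hconj hw₀.1
  have h2 := hu.length_mul hw₀.1
  have h3 := cs.length_mul_le (u * w₀ * u⁻¹) (u * s c)
  rw [show u * w₀ * u⁻¹ * (u * s c) = u * w₀ * s c by group] at h3
  unfold IsRightDescent at hc ⊢
  omega

end IsMinimalCosetRep

theorem isLongest_of_coxSupport_conj_eq [Finite W] {w v : W}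
    (hmin : ∀ g : W, ℓ w ≤ ℓ (g⁻¹ * w * g))
    (hv : coxSupport cs (v⁻¹ * w * v) = {b | cs.IsLeftDescent v⁻¹ b}) :
    cs.IsLongest (coxSupport cs w) v := by
  set K := coxSupport cs (v⁻¹ * w * v)
  have hdesc : ∀ b, cs.IsRightDescent v b ↔ b ∈ K := fun b ↦ by
    rw [hv, Set.mem_ofPred_eq, isLeftDescent_inv_iff]
  obtain ⟨w₀, hw₀⟩ := cs.exists_isLongest K
  obtain ⟨u, hvK, hu⟩ := cs.exists_isMinimalCosetRep v K
  have hvu : v = u * w₀ := by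
    rw [← hw₀.eq_of_forall_isRightDescent hvK fun k hk ↦ (hu.isRightDescent_mul_iff hvK hk).mp
      (by rw [mul_inv_cancel_left]; exact (hdesc k).mpr hk), mul_inv_cancel_left]
  obtain ⟨y, hy⟩ : ∃ y, y = w₀ * (v⁻¹ * w * v) * w₀ := ⟨_, rfl⟩
  have hyK : coxSupport cs y = K := hy ▸ hw₀.coxSupport_conj rfl
  have hyw : u * y * u⁻¹ = w := by
    have hw₀w₀ : ∀ g, w₀ * (w₀ * g) = g := fun g ↦ by rw [← mul_assoc, hw₀.mul_self, one_mul]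
    simp [hy, hvu, mul_assoc, hw₀w₀]
  have hlen : ℓ (u * y * u⁻¹) = ℓ y := by
    refine le_antisymm ?_ (hu.length_le_length_conj (hyK ▸ mem_parabolic_coxSupport y))
    calc ℓ (u * y * u⁻¹) = ℓ w := by rw [hyw]
      _ ≤ ℓ (u⁻¹ * w * u) := hmin u
      _ = ℓ y := by rw [← hyw]; congr 1; group
  have hconj : ∀ k ∈ K, ∃ c, u * s k * u⁻¹ = s c := by
    intro k hk
    rw [← hyK] at hk
    obtain ⟨ω, hω, hωy, hkω⟩ := hk
    exact hu.exists_conj_simple_eq hω (fun b hb ↦ hyK ▸ ⟨ω, hω, hωy, hb⟩) (hωy ▸ hlen) hkω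
  have hu1 : u = 1 := by
    by_contra hne
    obtain ⟨c, hc⟩ := cs.exists_rightDescent_of_ne_one hne
    have hcK : c ∈ K := (hdesc c).mp (hvu ▸ hu.isRightDescent_mul_of_isLongest hconj hw₀ hc)
    exact hu (s c) ((cs.isRightInversion_simple_iff_isRightDescent u c).mpr hc)
      (simple_mem_parabolic hcK)
  rw [hu1, one_mul] at hvu
  rw [hu1, one_mul, inv_one, mul_one] at hyw
  rwa [hvu, ← hyw, hyK]

end CoxeterSystem

/-- For `w` of minimal length in its conjugacy class:
`J(v⁻¹ w v) = D(v⁻¹)` if and only if `v` is the longest element of `W_{J(w)}`. -/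
theorem stmt_7 {B W : Type*} [Group W] [Finite W] {M : CoxeterMatrix B}
    (cs : CoxeterSystem M W) (w : W)
    (hmin : ∀ v : W, cs.length w ≤ cs.length (v⁻¹ * w * v))
    (wJ : W) (hwJmem : wJ ∈ Subgroup.closure (cs.simple '' coxSupport cs w))
    (hwJmax : ∀ v ∈ Subgroup.closure (cs.simple '' coxSupport cs w),
      cs.length v ≤ cs.length wJ)
    (v : W) :
    coxSupport cs (v⁻¹ * w * v) =
        {b : B | cs.length (cs.simple b * v⁻¹) < cs.length v⁻¹} ↔ v = wJ := by
  have hwJ : cs.IsLongest (coxSupport cs w) wJ := ⟨hwJmem, hwJmax⟩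
  constructor
  · exact fun hv ↦ hwJ.unique (cs.isLongest_of_coxSupport_conj_eq hmin hv)
  · rintro rfl
    exact hwJ.coxSupport_conj_eq_setOf_isLeftDescent_inv
end

section
/- Let n = m + k with m odd and k even positive. Let w ∈ W(D_n) act on {1,…,k} with an even number of negative cycles, all of even length, and as a single positive m-cycle on {k+1,…,n}. Then every involution in the centralizer C_{W(D_n)}(w) lies in the subgroup of block-diagonal elements diag(A,B) with A ∈ W(D_k); consequently the subgroup C_{W(D_n)}(w) ∩ (W(D_k) × S_m-part) of index 2 has no complement in C_{W(D_n)}(w). -/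
/-!
Writing a signed permutation (a permutation of `Fin n × ZMod 2` commuting with `negP`) as a
coordinate permutation followed by sign flips shows that its sign on the `2n` points is
`(-1)^(number of sign changes)`. Hence `W(D_n)` is the kernel of `sign`, and for block-preserving
elements the `W(D_k)` condition is the kernel of the sign of the restriction to the first block,
a homomorphism to `ℤˣ`.

A signed permutation commuting with `w` maps negative cycles to negative cycles, so it preserves
the first block. If it is an involution, the off-diagonal `-1` entries of its symmetric matrix
come in pairs, and the coordinates where it acts as `-1` form a union of cycles of `w`, each
through an even number of coordinates; so it lies in the kernel. The negative cycle `c` of `w`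
through `(0, 0)` has odd sign, and so has `negP` as `n` is odd, so `c * negP` centralizes `w` in
`W(D_n)` while its first block has odd sign (`k` is even): the kernel has index two. A complement
`N` meets the kernel trivially but contains `x * x` for each `x ∈ N`, an element of the kernel;
so `N` consists of involutions, hence of elements of the kernel, and is trivial, which is absurd.
-/

/-- The negation map on the points of `W(B_n)`. -/
def negP {n : ℕ} : Equiv.Perm (Fin n × ZMod 2) :=
  Equiv.prodCongr (Equiv.refl (Fin n)) (Equiv.addRight (1 : ZMod 2))

/-- Membership in `W(D_n)`: a signed permutation (a permutation of `Fin n × ZMod 2`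
commuting with negation) with an even number of sign changes. -/
def inDn {n : ℕ} (u : Equiv.Perm (Fin n × ZMod 2)) : Prop :=
  (∀ p, u (negP p) = negP (u p)) ∧
    Even (Nat.card {i : Fin n // (u (i, (0 : ZMod 2))).2 = 1})

/-- Block-diagonality `diag(A,B)` with respect to the first `k` points, with the
`A`-block lying in `W(D_k)` (an even number of sign changes among the first `k` points). -/
def blockDk {n : ℕ} (k : ℕ) (u : Equiv.Perm (Fin n × ZMod 2)) : Prop :=
  (∀ (i : Fin n) (s : ZMod 2), (i : ℕ) < k → ((u (i, s)).1 : ℕ) < k) ∧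
    Even (Nat.card {i : Fin n // (i : ℕ) < k ∧ (u (i, (0 : ZMod 2))).2 = 1})

open Equiv Equiv.Perm Finset

theorem ZMod.eq_zero_or_eq_one (s : ZMod 2) : s = 0 ∨ s = 1 := by
  decide +revert

theorem MonoidHom.card_eq_two_mul_card_ker {G : Type*} [Group G] (ψ : G →* ℤˣ)
    (hψ : ∃ g, ψ g ≠ 1) : Nat.card G = 2 * Nat.card ψ.ker := by
  have hsurj : Function.Surjective ψ := fun z => by
    obtain ⟨g, hg⟩ := hψ
    rcases Int.units_eq_one_or z with rfl | rfl
    exacts [⟨1, map_one ψ⟩, ⟨g, (Int.units_eq_one_or _).resolve_left hg⟩]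
  rw [← Subgroup.card_mul_index ψ.ker, Subgroup.index_ker, MonoidHom.range_eq_top.mpr hsurj,
    Subgroup.card_top, Nat.card_eq_fintype_card (α := ℤˣ), Fintype.card_units_int, mul_comm]

theorem Finset.even_card_of_involution {α : Type*} {s : Finset α} (g : α → α)
    (hg : ∀ a ∈ s, g a ∈ s) (hfree : ∀ a ∈ s, g a ≠ a) (hinv : ∀ a ∈ s, g (g a) = a) :
    Even #s := by
  rw [← ZMod.natCast_eq_zero_iff_even, card_eq_sum_ones, Nat.cast_sum, Nat.cast_one]
  exact sum_involution (fun a _ => g a) (fun _ _ => rfl) (fun a ha _ => hfree a ha) hg hinv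

theorem Equiv.Perm.dvd_card_of_dvd_card_support_cycleOf {α : Type*} [Fintype α] [DecidableEq α]
    {σ : Perm α} {s : Finset α} {d : ℕ} (hs : ∀ a b, σ.SameCycle a b → a ∈ s → b ∈ s)
    (hmove : ∀ a ∈ s, σ a ≠ a) (hd : ∀ a ∈ s, d ∣ #(σ.cycleOf a).support) : d ∣ #s := by
  rw [card_eq_sum_card_image σ.cycleOf s]
  refine dvd_sum fun c hc => ?_
  obtain ⟨a, ha, rfl⟩ := mem_image.mp hc
  have hfiber : {b ∈ s | σ.cycleOf b = σ.cycleOf a} = (σ.cycleOf a).support := by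
    ext b
    rw [mem_filter, mem_support_cycleOf_iff]
    constructor
    · rintro ⟨hb, hba⟩
      exact ⟨(sameCycle_iff_cycleOf_eq_of_mem_support (mem_support.mpr (hmove a ha))
        (mem_support.mpr (hmove b hb))).mpr hba.symm, mem_support.mpr (hmove a ha)⟩
    · rintro ⟨hab, -⟩
      exact ⟨hs a b hab ha, hab.cycleOf_eq.symm⟩
  rw [hfiber]
  exact hd a ha

namespace SignedPerm

variable {n : ℕ}

theorem negP_apply (p : Fin n × ZMod 2) : negP p = (p.1, p.2 + 1) := rfl

theorem negP_ne (p : Fin n × ZMod 2) : negP p ≠ p := by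
  rw [negP_apply, Ne, Prod.ext_iff]
  simp

def signedPerms (n : ℕ) : Subgroup (Perm (Fin n × ZMod 2)) :=
  Subgroup.centralizer {negP}

theorem mem_signedPerms {u : Perm (Fin n × ZMod 2)} :
    u ∈ signedPerms n ↔ ∀ p, u (negP p) = negP (u p) := by
  rw [signedPerms, Subgroup.mem_centralizer_singleton_iff, Perm.ext_iff]
  rfl

theorem negP_mem_signedPerms : negP ∈ signedPerms n :=
  Subgroup.mem_centralizer_singleton_iff.mpr rfl

variable {u : Perm (Fin n × ZMod 2)}

theorem apply_mk (hu : u ∈ signedPerms n) (i : Fin n) (s : ZMod 2) :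
    u (i, s) = ((u (i, 0)).1, (u (i, 0)).2 + s) := by
  obtain rfl | rfl := ZMod.eq_zero_or_eq_one s
  · simp
  · exact mem_signedPerms.mp hu (i, 0)

theorem sign_addRight_zmod_two (e : ZMod 2) :
    sign (Equiv.addRight e) = if e = 1 then -1 else 1 := by
  fin_cases e <;> decide

theorem sign_eq_neg_one_pow (hu : u ∈ signedPerms n) :
    sign u = (-1) ^ #{i : Fin n | (u (i, 0)).2 = 1} := by
  have hinj : Function.Injective fun i => (u (i, 0)).1 := by
    intro i j hij
    have : u (i, (u (j, 0)).2 - (u (i, 0)).2) = u (j, 0) := by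
      rw [apply_mk hu]; exact Prod.ext hij (by ring)
    exact (Prod.ext_iff.mp (u.injective this)).1
  set π := Equiv.ofBijective _ hinj.bijective_of_finite
  have hu_eq :
      u = prodCongrLeft (fun _ => π) * prodCongrRight fun i => Equiv.addRight (u (i, 0)).2 := by
    ext ⟨i, s⟩ <;> simp [π, apply_mk hu i s, add_comm]
  rw [congrArg sign hu_eq, Perm.sign_mul, sign_prodCongrLeft, sign_prodCongrRight, prod_const,
    card_univ, ZMod.card, Int.units_sq, one_mul]
  simp only [sign_addRight_zmod_two, prod_ite, prod_const, one_pow, mul_one]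

def Dn (n : ℕ) : Subgroup (Perm (Fin n × ZMod 2)) :=
  signedPerms n ⊓ sign.ker

theorem mem_Dn : u ∈ Dn n ↔ inDn u := by
  rw [Dn, Subgroup.mem_inf, MonoidHom.mem_ker, inDn, ← mem_signedPerms]
  refine and_congr_right fun hu => ?_
  rw [sign_eq_neg_one_pow hu, neg_one_pow_eq_one_iff_even (by decide), Nat.card_eq_fintype_card,
    Fintype.card_subtype]

def blockPerms (n k : ℕ) : Subgroup (Perm (Fin n × ZMod 2)) where
  carrier := {u | ∀ p, ((u p).1 : ℕ) < k ↔ (p.1 : ℕ) < k}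
  mul_mem' hu hv p := (hu _).trans (hv p)
  one_mem' _ := Iff.rfl
  inv_mem' {u} hu p := by simpa using (hu (u⁻¹ p)).symm

variable {k : ℕ}

theorem mem_blockPerms_of_mapsTo (h : ∀ p : Fin n × ZMod 2, (p.1 : ℕ) < k → ((u p).1 : ℕ) < k) :
    u ∈ blockPerms n k :=
  fun p => ⟨fun hp => by simpa using perm_symm_on_of_perm_on_finite h hp, h p⟩

variable (k) in
def firstBlockSign : blockPerms n k →* ℤˣ where
  toFun u := sign ((u : Perm (Fin n × ZMod 2)).subtypePerm
    (p := fun q : Fin n × ZMod 2 => (q.1 : ℕ) < k) u.2)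
  map_one' := sign_one
  map_mul' u v := by rw [← Perm.sign_mul]; rfl

theorem firstBlockSign_eq (hu : u ∈ signedPerms n) (hb : u ∈ blockPerms n k) :
    firstBlockSign k ⟨u, hb⟩ = (-1) ^ #{i : Fin n | (i : ℕ) < k ∧ (u (i, 0)).2 = 1} := by
  set v := ofSubtype (u.subtypePerm (p := fun q : Fin n × ZMod 2 => (q.1 : ℕ) < k) hb)
  have hv : ∀ p, v p = if (p.1 : ℕ) < k then u p else p := by
    intro p
    split_ifs with h
    · exact ofSubtype_apply_of_mem (p := fun q : Fin n × ZMod 2 => (q.1 : ℕ) < k) _ h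
    · exact ofSubtype_apply_of_not_mem (p := fun q : Fin n × ZMod 2 => (q.1 : ℕ) < k) _ h
  have hvs : v ∈ signedPerms n := mem_signedPerms.mpr fun p => by
    simp only [hv, negP_apply]
    split_ifs
    · exact mem_signedPerms.mp hu p
    · rfl
  calc firstBlockSign k ⟨u, hb⟩ = sign v := (sign_ofSubtype _).symm
    _ = _ := by
      rw [sign_eq_neg_one_pow hvs]
      congr 2
      ext i
      by_cases h : (i : ℕ) < k <;> simp [hv, h]

theorem blockDk_iff_even_card (hb : u ∈ blockPerms n k) :
    blockDk k u ↔ Even #{i : Fin n | (i : ℕ) < k ∧ (u (i, 0)).2 = 1} := by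
  rw [blockDk, Nat.card_eq_fintype_card, Fintype.card_subtype]
  exact and_iff_right fun i s hi => (hb (i, s)).mpr hi

theorem blockDk_iff_firstBlockSign_eq_one (hu : u ∈ signedPerms n) (hb : u ∈ blockPerms n k) :
    blockDk k u ↔ firstBlockSign k ⟨u, hb⟩ = 1 := by
  rw [firstBlockSign_eq hu hb, neg_one_pow_eq_one_iff_even (by decide), blockDk_iff_even_card hb]

theorem sameCycle_negP_iff {w : Perm (Fin n × ZMod 2)} {p : Fin n × ZMod 2} :
    w.SameCycle p (negP p) ↔ w.SameCycle (p.1, 0) (p.1, 1) := by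
  obtain ⟨i, s⟩ := p
  obtain rfl | rfl := ZMod.eq_zero_or_eq_one s
  · rfl
  · exact sameCycle_comm

theorem apply_eq_negP_iff (hu : u ∈ signedPerms n) {p : Fin n × ZMod 2} :
    u p = negP p ↔ u (p.1, 0) = (p.1, 1) := by
  rw [apply_mk hu, negP_apply, Prod.ext_iff, Prod.ext_iff, add_comm p.2]
  exact and_congr_right fun _ => add_left_inj _

theorem apply_eq_of_mul_self_eq_one (hu : u ∈ signedPerms n) (huu : u * u = 1) {i j : Fin n}
    {s : ZMod 2} (h : u (i, 0) = (j, s)) : u (j, 0) = (i, s) := by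
  have h' : u (j, s) = (i, 0) := by rw [← h, ← Perm.mul_apply, huu, Perm.one_apply]
  rw [apply_mk hu, Prod.ext_iff] at h'
  exact Prod.ext h'.1 (by rw [eq_neg_of_add_eq_zero_left h'.2, ZMod.neg_eq_self_mod_two])

theorem even_card_neg_offDiagonal (hu : u ∈ signedPerms n) (huu : u * u = 1)
    (hb : u ∈ blockPerms n k) :
    Even #{i : Fin n | ((i : ℕ) < k ∧ (u (i, 0)).2 = 1) ∧ u (i, 0) ≠ (i, 1)} := by
  have hpair : ∀ i : Fin n, (u (i, 0)).2 = 1 → u ((u (i, 0)).1, 0) = (i, 1) := fun i hi =>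
    apply_eq_of_mul_self_eq_one hu huu (Prod.ext rfl hi)
  refine even_card_of_involution (fun i => (u (i, 0)).1) (fun i hi => ?_) (fun i hi => ?_)
    (fun i hi => ?_)
  all_goals simp only [mem_filter, mem_univ, true_and] at hi ⊢
  · refine ⟨⟨(hb (i, 0)).mpr hi.1.1, by rw [hpair i hi.1.2]⟩, ?_⟩
    rw [hpair i hi.1.2]
    exact fun h => hi.2 (Prod.ext (Prod.ext_iff.mp h).1.symm hi.1.2)
  · exact fun h => hi.2 (Prod.ext h hi.1.2)
  · rw [hpair i hi.1.2]

theorem sign_negP : sign (negP : Perm (Fin n × ZMod 2)) = (-1) ^ n := by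
  rw [sign_eq_neg_one_pow negP_mem_signedPerms]
  simp [negP_apply]

theorem negP_mem_blockPerms : negP ∈ blockPerms n k := fun _ => Iff.rfl

theorem firstBlockSign_negP (hkn : k ≤ n) :
    firstBlockSign k ⟨(negP : Perm (Fin n × ZMod 2)), negP_mem_blockPerms⟩ = (-1) ^ k := by
  rw [firstBlockSign_eq negP_mem_signedPerms]
  simp [negP_apply, Fin.card_filter_val_lt, hkn]

section Centralizer

variable {w : Perm (Fin n × ZMod 2)}

theorem sameCycle_negP_negP_iff (hw : w ∈ signedPerms n) {p q : Fin n × ZMod 2} :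
    w.SameCycle (negP p) (negP q) ↔ w.SameCycle p q := by
  have hconj : negP * w * negP⁻¹ = w := by
    rw [(Subgroup.mem_centralizer_singleton_iff.mp hw).symm, mul_inv_cancel_right]
  simpa [hconj] using sameCycle_conj (g := negP) (f := w) (x := negP p) (y := negP q)

theorem cycleOf_mem_signedPerms (hw : w ∈ signedPerms n) {p : Fin n × ZMod 2}
    (hp : w.SameCycle p (negP p)) : w.cycleOf p ∈ signedPerms n := by
  refine mem_signedPerms.mpr fun q => ?_
  have hq : w.SameCycle p (negP q) ↔ w.SameCycle p q :=
    ⟨fun h => (sameCycle_negP_negP_iff hw).mp (hp.symm.trans h),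
      fun h => hp.trans ((sameCycle_negP_negP_iff hw).mpr h)⟩
  by_cases h : w.SameCycle p q
  · rw [(hq.mpr h).cycleOf_apply, h.cycleOf_apply, mem_signedPerms.mp hw]
  · rw [cycleOf_apply_of_not_sameCycle (mt hq.mp h), cycleOf_apply_of_not_sameCycle h]

theorem fst_lt_iff_of_sameCycle (hwb : w ∈ blockPerms n k) {p q : Fin n × ZMod 2}
    (h : w.SameCycle p q) : (p.1 : ℕ) < k ↔ (q.1 : ℕ) < k := by
  obtain ⟨j, rfl⟩ := h
  exact (zpow_mem hwb j p).symm

theorem cycleOf_mem_blockPerms (hwb : w ∈ blockPerms n k) (p : Fin n × ZMod 2) :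
    w.cycleOf p ∈ blockPerms n k := by
  intro q
  rw [cycleOf_apply]
  split_ifs
  exacts [hwb q, Iff.rfl]

theorem firstBlockSign_cycleOf (hwb : w ∈ blockPerms n k) {p : Fin n × ZMod 2}
    (hp : (p.1 : ℕ) < k) :
    firstBlockSign k ⟨w.cycleOf p, cycleOf_mem_blockPerms hwb p⟩ = sign (w.cycleOf p) :=
  sign_subtypePerm _ _ fun _ hq =>
    (fst_lt_iff_of_sameCycle hwb (mem_support_cycleOf_iff.mp (mem_support.mpr hq)).1).mp hp

def centralizerDn (w : Perm (Fin n × ZMod 2)) : Subgroup (Perm (Fin n × ZMod 2)) :=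
  Dn n ⊓ Subgroup.centralizer {w}

theorem mem_centralizerDn : u ∈ centralizerDn w ↔ inDn u ∧ u * w = w * u := by
  rw [centralizerDn, Subgroup.mem_inf, mem_Dn, Subgroup.mem_centralizer_singleton_iff]

theorem centralizerDn_le_signedPerms : centralizerDn w ≤ signedPerms n :=
  inf_le_left.trans inf_le_left

theorem apply_ne_self_of_sameCycle_negP {p : Fin n × ZMod 2} (h : w.SameCycle p (negP p)) :
    w p ≠ p :=
  fun hp => negP_ne p (h.eq_of_left hp).symm

section CycleHypotheses

variable (hneg : ∀ i : Fin n, (i : ℕ) < k → w.SameCycle (i, 0) (i, 1))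
  (hpos : ∀ i : Fin n, k ≤ (i : ℕ) → ¬ w.SameCycle (i, 0) (i, 1))
  (hlen : ∀ i : Fin n, (i : ℕ) < k → 4 ∣ #(w.cycleOf (i, 0)).support)
include hneg

include hlen in
theorem four_dvd_card_support_cycleOf {p : Fin n × ZMod 2} (hp : (p.1 : ℕ) < k) :
    4 ∣ #(w.cycleOf p).support := by
  obtain ⟨i, s⟩ := p
  obtain rfl | rfl := ZMod.eq_zero_or_eq_one s
  · exact hlen i hp
  · rw [← (hneg i hp).cycleOf_eq]
    exact hlen i hp

include hpos

theorem mem_blockPerms_of_commute (hu : u ∈ signedPerms n) (huw : u * w = w * u) :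
    u ∈ blockPerms n k := by
  refine mem_blockPerms_of_mapsTo fun p hp => not_le.mp fun hq => hpos _ hq ?_
  rw [← sameCycle_negP_iff, ← mem_signedPerms.mp hu]
  have := (sameCycle_negP_iff.mpr (hneg p.1 hp)).conj (g := u)
  rwa [huw, mul_inv_cancel_right] at this

theorem centralizerDn_le_blockPerms : centralizerDn w ≤ blockPerms n k :=
  fun _ hu => mem_blockPerms_of_commute hneg hpos (centralizerDn_le_signedPerms hu)
    (mem_centralizerDn.mp hu).2

theorem blockDk_iff_firstBlockSign_comp_eq_one (u : centralizerDn w) :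
    blockDk k (u : Perm (Fin n × ZMod 2)) ↔
      (firstBlockSign k).comp (Subgroup.inclusion (centralizerDn_le_blockPerms hneg hpos)) u = 1 :=
  blockDk_iff_firstBlockSign_eq_one (centralizerDn_le_signedPerms u.2) _

theorem blockDk_mul_self (hu : u ∈ centralizerDn w) : blockDk k (u * u) := by
  refine (blockDk_iff_firstBlockSign_comp_eq_one hneg hpos ⟨u * u, mul_mem hu hu⟩).mpr ?_
  rw [show (⟨u * u, mul_mem hu hu⟩ : centralizerDn w) = ⟨u, hu⟩ * ⟨u, hu⟩ from rfl, map_mul,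
    Int.units_mul_self]

theorem card_centralizerDn_eq_two_mul (hg : ∃ g ∈ centralizerDn w, ¬ blockDk k g) :
    Nat.card (centralizerDn w) = 2 * Nat.card {u // u ∈ centralizerDn w ∧ blockDk k u} := by
  have hψ := blockDk_iff_firstBlockSign_comp_eq_one hneg hpos
  obtain ⟨g, hgC, hg⟩ := hg
  rw [MonoidHom.card_eq_two_mul_card_ker _ ⟨⟨g, hgC⟩, mt (hψ _).mpr hg⟩]
  exact congrArg _ (Nat.card_congr ((Equiv.subtypeSubtypeEquivSubtypeExists _ _).trans
    (Equiv.subtypeEquivRight fun u =>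
      ⟨fun ⟨hu, h⟩ => ⟨hu, (hψ ⟨u, hu⟩).mpr h⟩, fun ⟨hu, h⟩ => ⟨hu, (hψ ⟨u, hu⟩).mp h⟩⟩)))

include hlen

-- `u` acts as `-1` exactly on the points of `Z`, a union of `w`-cycles of lengths divisible by 4.
theorem even_card_neg_diagonal (hw : w ∈ signedPerms n) (hu : u ∈ centralizerDn w) :
    Even #{i : Fin n | (i : ℕ) < k ∧ u (i, 0) = (i, 1)} := by
  have hwb : w ∈ blockPerms n k := mem_blockPerms_of_commute hneg hpos hw rfl
  have huw : Commute u w := (mem_centralizerDn.mp hu).2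
  set Z : Finset (Fin n × ZMod 2) := {p | (p.1 : ℕ) < k ∧ u p = negP p}
  have hZ : Z = ({i | (i : ℕ) < k ∧ u (i, 0) = (i, 1)} : Finset (Fin n)) ×ˢ univ := by
    ext p
    simp [Z, apply_eq_negP_iff (centralizerDn_le_signedPerms hu)]
  have h4 : 4 ∣ #Z := by
    refine dvd_card_of_dvd_card_support_cycleOf (σ := w) ?_ (fun p hp => ?_) (fun p hp => ?_)
    · rintro p _ ⟨j, rfl⟩ hp
      simp only [Z, mem_filter, mem_univ, true_and] at hp ⊢
      refine ⟨(zpow_mem hwb j p).mpr hp.1, ?_⟩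
      rw [← Perm.mul_apply, (huw.zpow_right j).eq, Perm.mul_apply, hp.2,
        mem_signedPerms.mp (zpow_mem hw j)]
    · simp only [Z, mem_filter, mem_univ, true_and] at hp
      exact apply_ne_self_of_sameCycle_negP (sameCycle_negP_iff.mpr (hneg _ hp.1))
    · simp only [Z, mem_filter, mem_univ, true_and] at hp
      exact four_dvd_card_support_cycleOf hneg hlen hp.1
  rw [hZ, card_product, card_univ, ZMod.card] at h4
  rw [even_iff_two_dvd]
  omega

theorem blockDk_of_mul_self_eq_one (hw : w ∈ signedPerms n) (hu : u ∈ centralizerDn w)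
    (huu : u * u = 1) : blockDk k u := by
  have hsgn := centralizerDn_le_signedPerms hu
  have hb := centralizerDn_le_blockPerms hneg hpos hu
  have hdiag : ({i : Fin n | ((i : ℕ) < k ∧ (u (i, 0)).2 = 1) ∧ u (i, 0) = (i, 1)} : Finset _) =
      ({i : Fin n | (i : ℕ) < k ∧ u (i, 0) = (i, 1)} : Finset _) := by
    ext i
    simp only [mem_filter, mem_univ, true_and]
    exact ⟨fun h => ⟨h.1.1, h.2⟩, fun h => ⟨⟨h.1, by rw [h.2]⟩, h.2⟩⟩
  rw [blockDk_iff_even_card hb, ← card_filter_add_card_filter_not (fun i => u (i, 0) = (i, 1)),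
    filter_filter, filter_filter, hdiag]
  exact (even_card_neg_diagonal hneg hpos hlen hw hu).add
    (even_card_neg_offDiagonal hsgn huu hb)

theorem exists_mem_centralizerDn_not_blockDk (hn : Odd n) (hk : Even k) (hkpos : 0 < k)
    (hkn : k ≤ n) (hw : w ∈ signedPerms n) : ∃ g ∈ centralizerDn w, ¬ blockDk k g := by
  set p : Fin n × ZMod 2 := (⟨0, by omega⟩, 0)
  have hp : w.SameCycle p (negP p) := hneg _ hkpos
  have hwp : w p ≠ p := apply_ne_self_of_sameCycle_negP hp
  have hwb : w ∈ blockPerms n k := mem_blockPerms_of_commute hneg hpos hw rfl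
  have hcS := cycleOf_mem_signedPerms hw hp
  have hcb := cycleOf_mem_blockPerms hwb p
  have hcw : w.cycleOf p * w = w * w.cycleOf p :=
    (self_mem_cycle_factors_commute (cycleOf_mem_cycleFactorsFinset_iff.mpr
      (mem_support.mpr hwp))).eq
  have hnw : negP * w = w * negP := (Subgroup.mem_centralizer_singleton_iff.mp hw).symm
  have hsign : sign (w.cycleOf p) = -1 := by
    have h2 : 2 ∣ #(w.cycleOf p).support :=
      dvd_trans (by norm_num) (four_dvd_card_support_cycleOf hneg hlen hkpos)
    rw [(isCycle_cycleOf w hwp).sign, (even_iff_two_dvd.mpr h2).neg_one_pow]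
  refine ⟨w.cycleOf p * negP, mem_centralizerDn.mpr ⟨mem_Dn.mp (Subgroup.mem_inf.mpr
    ⟨mul_mem hcS negP_mem_signedPerms, MonoidHom.mem_ker.mpr ?_⟩), ?_⟩, fun h => ?_⟩
  · rw [Perm.sign_mul, hsign, sign_negP, hn.neg_one_pow, neg_one_mul, neg_neg]
  · rw [mul_assoc, hnw, ← mul_assoc, hcw, mul_assoc]
  · rw [blockDk_iff_firstBlockSign_eq_one (mul_mem hcS negP_mem_signedPerms)
      (mul_mem hcb negP_mem_blockPerms)] at h
    have hmul := map_mul (firstBlockSign k) ⟨w.cycleOf p, hcb⟩ ⟨negP, negP_mem_blockPerms⟩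
    rw [firstBlockSign_cycleOf hwb hkpos, hsign, firstBlockSign_negP hkn, hk.neg_one_pow] at hmul
    exact absurd (hmul.symm.trans h) (by decide)

end CycleHypotheses

end Centralizer

end SignedPerm

open SignedPerm in
theorem stmt_14_general (n m k : ℕ) (hn : n = m + k) (hm : Odd m) (hk : Even k) (hkpos : 0 < k)
    (w : Equiv.Perm (Fin n × ZMod 2))
    (hwD : inDn w)
    (hnegcyc : ∀ i : Fin n, (i : ℕ) < k → w.SameCycle (i, (0 : ZMod 2)) (i, (1 : ZMod 2)))
    (hevenlen : ∀ i : Fin n, (i : ℕ) < k → 4 ∣ (w.cycleOf (i, (0 : ZMod 2))).support.card)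
    (hposcyc : ∀ i : Fin n, k ≤ (i : ℕ) →
      ¬ w.SameCycle (i, (0 : ZMod 2)) (i, (1 : ZMod 2))) :
    (∀ u : Equiv.Perm (Fin n × ZMod 2),
      inDn u → u * w = w * u → u * u = 1 → blockDk k u) ∧
    (Nat.card {u : Equiv.Perm (Fin n × ZMod 2) // inDn u ∧ u * w = w * u} =
      2 * Nat.card {u : Equiv.Perm (Fin n × ZMod 2) //
        (inDn u ∧ u * w = w * u) ∧ blockDk k u}) ∧
    ¬ ∃ N : Subgroup (Equiv.Perm (Fin n × ZMod 2)),
      (∀ x ∈ N, inDn x ∧ x * w = w * x) ∧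
      (∀ x ∈ N, blockDk k x → x = 1) ∧
      (∀ c : Equiv.Perm (Fin n × ZMod 2), inDn c → c * w = w * c →
        ∃ h x, (inDn h ∧ h * w = w * h ∧ blockDk k h) ∧ x ∈ N ∧ c = h * x) := by
  have hw : w ∈ signedPerms n := mem_signedPerms.mpr hwD.1
  have hinvol : ∀ u, inDn u → u * w = w * u → u * u = 1 → blockDk k u := fun u hu huw =>
    blockDk_of_mul_self_eq_one hnegcyc hposcyc hevenlen hw (mem_centralizerDn.mpr ⟨hu, huw⟩)
  obtain ⟨g, hgC, hg⟩ := exists_mem_centralizerDn_not_blockDk hnegcyc hposcyc hevenlen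
    (by rw [hn]; exact hm.add_even hk) hk hkpos (by omega) hw
  refine ⟨hinvol, ?_, ?_⟩
  · simp_rw [← mem_centralizerDn]
    exact card_centralizerDn_eq_two_mul hnegcyc hposcyc ⟨g, hgC, hg⟩
  · rintro ⟨N, hNC, hNtriv, hNgen⟩
    have hN : ∀ x ∈ N, x = 1 := fun x hx => hNtriv x hx <| hinvol x (hNC x hx).1 (hNC x hx).2 <|
      hNtriv _ (N.mul_mem hx hx) <|
        blockDk_mul_self hnegcyc hposcyc (mem_centralizerDn.mpr (hNC x hx))
    obtain ⟨hgD, hgw⟩ := mem_centralizerDn.mp hgC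
    obtain ⟨h, x, ⟨-, -, hh⟩, hx, rfl⟩ := hNgen g hgD hgw
    exact hg (by rwa [hN x hx, mul_one])

/-- Let `n = m + k`, `m` odd, `k > 0` even, and let `w ∈ W(D_n)` act on the first `k`
points with an even number of negative cycles, all of even length, and on the last `m`
points as a single positive `m`-cycle.  Then every involution of `C_{W(D_n)}(w)` is
block-diagonal with `A`-block in `W(D_k)`; consequently the corresponding index-two
subgroup of `C_{W(D_n)}(w)` has no complement in `C_{W(D_n)}(w)`. -/
theorem stmt_14 (n m k : ℕ) (hn : n = m + k) (hm : Odd m) (hk : Even k) (hkpos : 0 < k)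
    (w : Equiv.Perm (Fin n × ZMod 2))
    (hwD : inDn w)
    (hblock : ∀ (i : Fin n) (s : ZMod 2), (i : ℕ) < k → ((w (i, s)).1 : ℕ) < k)
    (hnegcyc : ∀ i : Fin n, (i : ℕ) < k → w.SameCycle (i, (0 : ZMod 2)) (i, (1 : ZMod 2)))
    (hevenlen : ∀ i : Fin n, (i : ℕ) < k → 4 ∣ (w.cycleOf (i, (0 : ZMod 2))).support.card)
    (hevennum : Even (Nat.card {c : Equiv.Perm (Fin n × ZMod 2) //
      c ∈ w.cycleFactorsFinset ∧ ∃ i : Fin n, (i : ℕ) < k ∧ c (i, (0 : ZMod 2)) ≠ (i, 0)}))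
    (honecyc : ∀ i j : Fin n, k ≤ (i : ℕ) → k ≤ (j : ℕ) →
      (w.SameCycle (i, (0 : ZMod 2)) (j, (0 : ZMod 2)) ∨
        w.SameCycle (i, (0 : ZMod 2)) (j, (1 : ZMod 2))))
    (hposcyc : ∀ i : Fin n, k ≤ (i : ℕ) →
      ¬ w.SameCycle (i, (0 : ZMod 2)) (i, (1 : ZMod 2))) :
    (∀ u : Equiv.Perm (Fin n × ZMod 2),
      inDn u → u * w = w * u → u * u = 1 → blockDk k u) ∧
    (Nat.card {u : Equiv.Perm (Fin n × ZMod 2) // inDn u ∧ u * w = w * u} =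
      2 * Nat.card {u : Equiv.Perm (Fin n × ZMod 2) //
        (inDn u ∧ u * w = w * u) ∧ blockDk k u}) ∧
    ¬ ∃ N : Subgroup (Equiv.Perm (Fin n × ZMod 2)),
      (∀ x ∈ N, inDn x ∧ x * w = w * x) ∧
      (∀ x ∈ N, blockDk k x → x = 1) ∧
      (∀ c : Equiv.Perm (Fin n × ZMod 2), inDn c → c * w = w * c →
        ∃ h x, (inDn h ∧ h * w = w * h ∧ blockDk k h) ∧ x ∈ N ∧ c = h * x) :=
  stmt_14_general n m k hn hm hk hkpos w hwD hnegcyc hevenlen hposcyc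
end

section
/- Let W = W₁ × W₂ be a direct product of finite groups, w = (w₁, w₂), and H = H₁ × H₂ a subgroup with Hᵢ ≤ C_{Wᵢ}(wᵢ). If C_{W₁}(w₁) has no complement over H₁ (i.e., there is no subgroup N with C_{W₁}(w₁) = H₁ ⋊ N), then C_W(w) = C_{W₁}(w₁) × C_{W₂}(w₂) has no complement over H₁ × H₂. -/
open Pointwise

/-- If `W = W₁ × W₂`, `w = (w₁, w₂)`, `Hᵢ ≤ C_{Wᵢ}(wᵢ)` with `H₁` normal in `C_{W₁}(w₁)`
and `H₂` normal in `C_{W₂}(w₂)`, and `C_{W₁}(w₁)` has no complement over `H₁`, then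
`C_W(w) = C_{W₁}(w₁) × C_{W₂}(w₂)` has no complement over `H₁ × H₂`. -/
theorem stmt_16 {W₁ W₂ : Type*} [Group W₁] [Group W₂] [Finite W₁] [Finite W₂]
    (w₁ : W₁) (w₂ : W₂) (H₁ : Subgroup W₁) (H₂ : Subgroup W₂)
    (h₁ : H₁ ≤ Subgroup.centralizer {w₁}) (h₂ : H₂ ≤ Subgroup.centralizer {w₂})
    (h₁n : ∀ c ∈ Subgroup.centralizer {w₁}, ∀ h ∈ H₁, c * h * c⁻¹ ∈ H₁)
    (h₂n : ∀ c ∈ Subgroup.centralizer {w₂}, ∀ h ∈ H₂, c * h * c⁻¹ ∈ H₂)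
    (hno : ¬ ∃ N : Subgroup W₁, N ≤ Subgroup.centralizer {w₁} ∧ H₁ ⊓ N = ⊥ ∧
      (H₁ : Set W₁) * (N : Set W₁) = (Subgroup.centralizer {w₁} : Set W₁)) :
    ¬ ∃ N : Subgroup (W₁ × W₂), N ≤ Subgroup.centralizer {(w₁, w₂)} ∧
      H₁.prod H₂ ⊓ N = ⊥ ∧
      (H₁.prod H₂ : Set (W₁ × W₂)) * (N : Set (W₁ × W₂)) =
        (Subgroup.centralizer {(w₁, w₂)} : Set (W₁ × W₂)) := by
  rintro ⟨N, hNle, hNint, hNmul⟩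
  apply hno
  -- characterize centralizer membership in the product
  have hcent : ∀ p : W₁ × W₂, p ∈ Subgroup.centralizer {(w₁, w₂)} ↔
      p.1 ∈ Subgroup.centralizer {w₁} ∧ p.2 ∈ Subgroup.centralizer {w₂} := by
    intro p
    rw [Subgroup.mem_centralizer_iff, Subgroup.mem_centralizer_iff,
      Subgroup.mem_centralizer_iff]
    constructor
    · intro h
      have := h _ rfl
      rw [Prod.ext_iff] at this
      exact ⟨fun g hg => by rw [Set.mem_singleton_iff] at hg; subst hg; exact this.1,
        fun g hg => by rw [Set.mem_singleton_iff] at hg; subst hg; exact this.2⟩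
    · rintro ⟨ha, hb⟩ g hg
      rw [Set.mem_singleton_iff] at hg; subst hg
      exact Prod.ext (ha _ rfl) (hb _ rfl)
  refine ⟨((⊤ : Subgroup W₁).prod H₂ ⊓ N).map (MonoidHom.fst W₁ W₂), ?_, ?_, ?_⟩
  · rintro x ⟨⟨a, b⟩, ⟨-, hbN⟩, rfl⟩
    exact ((hcent _).1 (hNle hbN)).1
  · ext x
    simp only [Subgroup.mem_inf, Subgroup.mem_map, Subgroup.mem_bot]
    constructor
    · rintro ⟨hx, ⟨a, b⟩, ⟨⟨-, hb⟩, hN⟩, rfl⟩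
      have : (a, b) ∈ H₁.prod H₂ ⊓ N := ⟨⟨hx, hb⟩, hN⟩
      rw [hNint, Subgroup.mem_bot] at this
      exact congrArg Prod.fst this
    · rintro rfl
      exact ⟨H₁.one_mem, (1, 1), ⟨⟨trivial, H₂.one_mem⟩, N.one_mem⟩, rfl⟩
  · ext g
    constructor
    · rintro ⟨h, hh, n, ⟨⟨a, b⟩, ⟨⟨-, hb⟩, hN⟩, rfl⟩, rfl⟩
      exact Subgroup.mul_mem _ (h₁ hh) (((hcent _).1 (hNle hN)).1)
    · intro hg
      have : ((g, 1) : W₁ × W₂) ∈ (H₁.prod H₂ : Set (W₁ × W₂)) * (N : Set (W₁ × W₂)) := by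
        rw [hNmul]
        exact (hcent _).2 ⟨hg, Subgroup.one_mem _⟩
      obtain ⟨⟨h₁', h₂'⟩, hh, ⟨n₁, n₂⟩, hn, heq⟩ := this
      simp only [Prod.mk_mul_mk, Prod.mk.injEq] at heq
      obtain ⟨he1, he2⟩ := heq
      have hn₂ : n₂ ∈ H₂ := (inv_eq_of_mul_eq_one_right he2) ▸ H₂.inv_mem hh.2
      exact ⟨h₁', hh.1, n₁, ⟨(n₁, n₂), ⟨⟨trivial, hn₂⟩, hn⟩, rfl⟩, he1⟩
end
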